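/- arXiv:1907.11471 — 9 statements merged into one kernel-verified Lean document; each statement's English description precedes it below -/
import Mathlib

section
/- Let g, h : ℝ^m → ℝ be convex functions with g differentiable on ℝ^m, and set φ := g − h. If x* ∈ ℝ^m is a local minimizer of φ, then ∂h(x*) = {∇g(x*)}, i.e. the subdifferential of h at x* consists exactly of the gradient of g at x*. -/
open RealInnerProductSpace

/-- The convex subdifferential of `f` at `x`. -/
def subdiff {E : Type*} [NormedAddCommGroup E] [InnerProductSpace ℝ E]
    (f : E → ℝ) (x : E) : Set E :=
  {w | ∀ y, f x + ⟪w, y - x⟫ ≤ f y}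

/-- If `g, h : ℝ^m → ℝ` are convex, `g` is differentiable on `ℝ^m` (with gradient `g'`),
and `x*` is a local minimizer of `φ = g - h`, then `∂h(x*) = {∇g(x*)}`. -/
theorem stmt0 {m : ℕ} (g h : EuclideanSpace ℝ (Fin m) → ℝ)
    (g' : EuclideanSpace ℝ (Fin m) → EuclideanSpace ℝ (Fin m))
    (hg : ConvexOn ℝ Set.univ g) (hh : ConvexOn ℝ Set.univ h)
    (hg' : ∀ x, HasGradientAt g (g' x) x)
    (xs : EuclideanSpace ℝ (Fin m))
    (hmin : IsLocalMin (fun x => g x - h x) xs) :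
    subdiff h xs = {g' xs} := by
  have hminE : ∀ᶠ z in nhds xs, g xs - h xs ≤ g z - h z := hmin
  apply Set.eq_singleton_iff_unique_mem.mpr
  constructor
  · -- `g' xs ∈ subdiff h xs`
    intro y
    set v : EuclideanSpace ℝ (Fin m) := y - xs with hv
    have hcurve : ∀ s : ℝ, HasDerivAt (fun s : ℝ => xs - s • v) (-v) s := by
      intro s
      simpa using ((hasDerivAt_id s).smul_const v).const_sub xs
    have hcomp : HasDerivAt (fun s : ℝ => g (xs - s • v)) (-⟪g' xs, v⟫) 0 := by
      have h0 := (hg' (xs - (0:ℝ) • v)).hasFDerivAt.comp_hasDerivAt 0 (hcurve 0)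
      have he : ((InnerProductSpace.toDual ℝ _) (g' (xs - (0:ℝ) • v))) (-v)
          = -⟪g' xs, v⟫ := by
        rw [InnerProductSpace.toDual_apply_apply, inner_neg_right,
          show xs - (0:ℝ) • v = xs by simp]
      rw [he] at h0
      exact h0
    have hslope : Filter.Tendsto (fun s : ℝ => (g xs - g (xs - s • v)) / s)
        (nhdsWithin 0 (Set.Ioi 0)) (nhds ⟪g' xs, v⟫) := by
      have h1 := (hasDerivAt_iff_tendsto_slope.1 hcomp).mono_left
        (nhdsWithin_mono 0 (by intro s hs; exact ne_of_gt hs : Set.Ioi (0:ℝ) ⊆ {0}ᶜ))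
      have h2 := h1.neg
      simp only [← nhds_neg, neg_neg] at h2
      refine h2.congr' ?_
      filter_upwards [self_mem_nhdsWithin] with s hs
      simp only [slope_def_field, sub_zero, zero_smul]
      rw [← neg_div, neg_sub]
    have hev : ∀ᶠ s : ℝ in nhdsWithin 0 (Set.Ioi 0),
        (g xs - g (xs - s • v)) / s ≤ h y - h xs := by
      have htend : Filter.Tendsto (fun s : ℝ => xs - s • v)
          (nhdsWithin 0 (Set.Ioi 0)) (nhds xs) := by
        have := ((hcurve 0).continuousAt).tendsto
        simpa using this.mono_left nhdsWithin_le_nhds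
      have hmin' := htend.eventually hminE
      have hle1 : ∀ᶠ s : ℝ in nhdsWithin 0 (Set.Ioi 0), s ≤ 1 :=
        eventually_nhdsWithin_of_eventually_nhds
          (Filter.tendsto_id.eventually (ge_mem_nhds (by norm_num : (0:ℝ) < 1)))
      filter_upwards [hmin', hle1, self_mem_nhdsWithin] with s hs1 hs2 hs3
      have hspos : (0:ℝ) < s := hs3
      have hc1 : h (xs + s • v) ≤ (1 - s) * h xs + s * h y := by
        have := hh.2 (Set.mem_univ xs) (Set.mem_univ y)
          (show (0:ℝ) ≤ 1 - s by linarith) (show (0:ℝ) ≤ s from hspos.le) (by ring)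
        have heq : (1 - s) • xs + s • y = xs + s • v := by
          rw [hv]; module
        simpa [heq, smul_eq_mul] using this
      have hc2 : h xs ≤ (1/2 : ℝ) * h (xs + s • v) + (1/2 : ℝ) * h (xs - s • v) := by
        have := hh.2 (Set.mem_univ (xs + s • v)) (Set.mem_univ (xs - s • v))
          (show (0:ℝ) ≤ 1/2 by norm_num) (show (0:ℝ) ≤ 1/2 by norm_num) (by norm_num)
        have heq : (1/2 : ℝ) • (xs + s • v) + (1/2 : ℝ) • (xs - s • v) = xs := by
          module
        rw [heq] at this
        simpa [smul_eq_mul] using this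
      have hc3 : g xs - h xs ≤ g (xs - s • v) - h (xs - s • v) := hs1
      rw [div_le_iff₀ hspos]
      nlinarith [hc1, hc2, hc3]
    have hfin := le_of_tendsto hslope hev
    show h xs + ⟪g' xs, y - xs⟫ ≤ h y
    rw [← hv]
    linarith
  · -- uniqueness
    intro w hw
    have hψ : HasFDerivAt (fun z => g z - ⟪w, z⟫)
        ((InnerProductSpace.toDual ℝ (EuclideanSpace ℝ (Fin m)) (g' xs))
          - (InnerProductSpace.toDual ℝ (EuclideanSpace ℝ (Fin m)) w)) xs := by
      have := (hg' xs).hasFDerivAt.sub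
        ((InnerProductSpace.toDual ℝ (EuclideanSpace ℝ (Fin m))) w).hasFDerivAt
      exact this
    have hlmin : IsLocalMin (fun z => g z - ⟪w, z⟫) xs := by
      filter_upwards [hminE] with z hz
      have h1 := hw z
      have h2 : ⟪w, z - xs⟫ = ⟪w, z⟫ - ⟪w, xs⟫ := inner_sub_right w z xs
      show g xs - ⟪w, xs⟫ ≤ g z - ⟪w, z⟫
      linarith
    have hzero := hlmin.hasFDerivAt_eq_zero hψ
    have h3 : (InnerProductSpace.toDual ℝ (EuclideanSpace ℝ (Fin m))) (g' xs - w)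
        = (InnerProductSpace.toDual ℝ (EuclideanSpace ℝ (Fin m))) 0 := by
      rw [map_sub, map_zero]; exact hzero
    have h4 := (InnerProductSpace.toDual ℝ (EuclideanSpace ℝ (Fin m))).injective h3
    have h5 := sub_eq_zero.mp h4
    exact h5.symm
end

section
/- Let g, h : ℝ^m → ℝ be convex functions with g differentiable on ℝ^m, and set φ := g − h. A point x* ∈ ℝ^m satisfies ∂h(x*) = {∇g(x*)} if and only if the one-sided directional derivative φ'(x*; d) exists and equals 0 for every direction d ∈ ℝ^m. -/
open RealInnerProductSpace Filter

/-- `f` has one-sided directional derivative `L` at `x` in direction `d`. -/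
def HasDirDeriv {E : Type*} [NormedAddCommGroup E] [Module ℝ E]
    (f : E → ℝ) (x d : E) (L : ℝ) : Prop :=
  Tendsto (fun t : ℝ => (f (x + t • d) - f x) / t) (nhdsWithin 0 (Set.Ioi 0)) (nhds L)

section aux
variable {E : Type*} [NormedAddCommGroup E] [InnerProductSpace ℝ E]

/-- The difference quotient of `f` at `x` in direction `d`. -/
noncomputable def dq (f : E → ℝ) (x d : E) (t : ℝ) : ℝ := (f (x + t • d) - f x) / t

/-- The one-sided directional derivative of a convex function, as an infimum. -/
noncomputable def ddp (f : E → ℝ) (x d : E) : ℝ := sInf (dq f x d '' Set.Ioi 0)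

lemma dq_mono {f : E → ℝ} (hf : ConvexOn ℝ Set.univ f) (x d : E) :
    MonotoneOn (dq f x d) (Set.Ioi 0) := by
  intro s hs t ht hst
  have hs : (0:ℝ) < s := hs
  have ht : (0:ℝ) < t := ht
  have hvec : (1 - s/t) • x + (s/t) • (x + t • d) = x + s • d := by
    have h1 : s/t * t = s := div_mul_cancel₀ s ht.ne'
    match_scalars <;> field_simp <;> ring
  have hcon := hf.2 (Set.mem_univ x) (Set.mem_univ (x + t • d))
    (show (0:ℝ) ≤ 1 - s/t by rw [sub_nonneg]; exact div_le_one_of_le₀ hst ht.le)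
    (show (0:ℝ) ≤ s/t by positivity) (by ring)
  rw [hvec, smul_eq_mul, smul_eq_mul] at hcon
  have e : s / t * t = s := div_mul_cancel₀ s ht.ne'
  have e1 : s / t * t * f x = s * f x := by rw [e]
  have e2 : s / t * t * f (x + t • d) = s * f (x + t • d) := by rw [e]
  have hcon2 := mul_le_mul_of_nonneg_right hcon ht.le
  rw [dq, dq, div_le_div_iff₀ hs ht]
  nlinarith [hcon2, e1, e2]

lemma dq_bddBelow {f : E → ℝ} (hf : ConvexOn ℝ Set.univ f) (x d : E) :
    BddBelow (dq f x d '' Set.Ioi 0) := by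
  refine ⟨f x - f (x - d), ?_⟩
  rintro _ ⟨t, ht, rfl⟩
  have ht : (0:ℝ) < t := ht
  have hvec : (t/(t+1)) • (x - d) + (1/(t+1)) • (x + t • d) = x := by
    match_scalars <;> field_simp <;> ring
  have hcon := hf.2 (Set.mem_univ (x - d)) (Set.mem_univ (x + t • d))
    (show (0:ℝ) ≤ t/(t+1) by positivity) (show (0:ℝ) ≤ 1/(t+1) by positivity)
    (by field_simp)
  rw [hvec, smul_eq_mul, smul_eq_mul] at hcon
  rw [dq, le_div_iff₀ ht]
  have h1 : (0:ℝ) < t + 1 := by linarith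
  have e1 : t / (t+1) * (t+1) = t := div_mul_cancel₀ t h1.ne'
  have e2 : 1 / (t+1) * (t+1) = 1 := div_mul_cancel₀ 1 h1.ne'
  have e1' : t / (t+1) * (t+1) * f (x - d) = t * f (x - d) := by rw [e1]
  have e2' : 1 / (t+1) * (t+1) * f (x + t • d) = 1 * f (x + t • d) := by rw [e2]
  have hcon2 := mul_le_mul_of_nonneg_right hcon h1.le
  nlinarith [hcon2, e1', e2']

lemma hasDirDeriv_of_convex {f : E → ℝ} (hf : ConvexOn ℝ Set.univ f) (x d : E) :
    Tendsto (fun t : ℝ => (f (x + t • d) - f x) / t) (nhdsWithin 0 (Set.Ioi 0))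
      (nhds (ddp f x d)) :=
  MonotoneOn.tendsto_nhdsGT (dq_mono hf x d) (dq_bddBelow hf x d)

lemma ddp_le_dq {f : E → ℝ} (hf : ConvexOn ℝ Set.univ f) (x d : E) {t : ℝ} (ht : 0 < t) :
    ddp f x d ≤ dq f x d t :=
  csInf_le (dq_bddBelow hf x d) ⟨t, ht, rfl⟩

lemma ddp_zero (f : E → ℝ) (x : E) : ddp f x 0 = 0 := by
  have : dq f x 0 '' Set.Ioi 0 = {0} := by
    ext y
    simp only [Set.mem_image, Set.mem_singleton_iff]
    constructor
    · rintro ⟨t, ht, rfl⟩; simp [dq]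
    · rintro rfl; exact ⟨1, Set.mem_Ioi.2 one_pos, by simp [dq]⟩
  rw [ddp, this, csInf_singleton]

lemma inner_le_ddp {f : E → ℝ} (hf : ConvexOn ℝ Set.univ f) {x w : E}
    (hw : w ∈ subdiff f x) (d : E) :
    ⟪w, d⟫ ≤ ddp f x d := by
  refine le_csInf ⟨dq f x d 1, 1, Set.mem_Ioi.mpr one_pos, rfl⟩ ?_
  rintro _ ⟨t, ht, rfl⟩
  have ht : (0:ℝ) < t := ht
  have := hw (x + t • d)
  rw [add_sub_cancel_left, real_inner_smul_right] at this
  rw [dq, le_div_iff₀ ht]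
  linarith

lemma tendsto_smul_nhdsWithin (c : ℝ) (hc : 0 < c) :
    Tendsto (fun t : ℝ => c * t) (nhdsWithin 0 (Set.Ioi 0)) (nhdsWithin 0 (Set.Ioi 0)) := by
  have h1 : Tendsto (fun t : ℝ => c * t) (nhdsWithin 0 (Set.Ioi 0)) (nhds 0) := by
    have h2 : Tendsto (fun t : ℝ => c * t) (nhds 0) (nhds (c * 0)) :=
      (tendsto_id.const_mul c)
    rw [mul_zero] at h2
    exact h2.mono_left nhdsWithin_le_nhds
  refine tendsto_nhdsWithin_of_tendsto_nhds_of_eventually_within _ h1 ?_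
  filter_upwards [self_mem_nhdsWithin] with t ht
  exact mul_pos hc ht

lemma ddp_smul {f : E → ℝ} (hf : ConvexOn ℝ Set.univ f) (x d : E) {c : ℝ} (hc : 0 < c) :
    ddp f x (c • d) = c * ddp f x d := by
  have h1 : Tendsto (fun t : ℝ => (f (x + t • (c • d)) - f x) / t)
      (nhdsWithin 0 (Set.Ioi 0)) (nhds (c * ddp f x d)) := by
    have h2 : Tendsto (fun t : ℝ => c * ((f (x + (c * t) • d) - f x) / (c * t)))
        (nhdsWithin 0 (Set.Ioi 0)) (nhds (c * ddp f x d)) :=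
      (((hasDirDeriv_of_convex hf x d).comp (tendsto_smul_nhdsWithin c hc)).const_mul c)
    refine h2.congr' ?_
    filter_upwards [self_mem_nhdsWithin] with t ht
    have ht : (0:ℝ) < t := ht
    rw [smul_smul, mul_comm t c]
    field_simp
  exact tendsto_nhds_unique (hasDirDeriv_of_convex hf x (c • d)) h1

lemma ddp_add {f : E → ℝ} (hf : ConvexOn ℝ Set.univ f) (x d₁ d₂ : E) :
    ddp f x (d₁ + d₂) ≤ ddp f x d₁ + ddp f x d₂ := by
  have hlim : Tendsto (fun t : ℝ => dq f x d₁ (2 * t) + dq f x d₂ (2 * t))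
      (nhdsWithin 0 (Set.Ioi 0)) (nhds (ddp f x d₁ + ddp f x d₂)) :=
    ((hasDirDeriv_of_convex hf x d₁).comp (tendsto_smul_nhdsWithin 2 two_pos)).add
      ((hasDirDeriv_of_convex hf x d₂).comp (tendsto_smul_nhdsWithin 2 two_pos))
  refine le_of_tendsto_of_tendsto (hasDirDeriv_of_convex hf x (d₁ + d₂)) hlim ?_
  filter_upwards [self_mem_nhdsWithin] with t ht
  have ht : (0:ℝ) < t := ht
  have hvec : x + t • (d₁ + d₂) =
      (1/2 : ℝ) • (x + (2*t) • d₁) + (1/2 : ℝ) • (x + (2*t) • d₂) := by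
    match_scalars <;> ring
  have hcon := hf.2 (Set.mem_univ (x + (2*t) • d₁)) (Set.mem_univ (x + (2*t) • d₂))
    (show (0:ℝ) ≤ 1/2 by norm_num) (show (0:ℝ) ≤ 1/2 by norm_num) (by norm_num)
  rw [← hvec, smul_eq_mul, smul_eq_mul] at hcon
  show (f (x + t • (d₁ + d₂)) - f x) / t ≤ dq f x d₁ (2*t) + dq f x d₂ (2*t)
  rw [dq, dq, div_add_div _ _ (by positivity : (2*t) ≠ 0) (by positivity : (2*t) ≠ 0),
    div_le_div_iff₀ ht (by positivity)]
  nlinarith [hcon]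

lemma c_mul_ddp_le {f : E → ℝ} (hf : ConvexOn ℝ Set.univ f) (x d : E) (c : ℝ) :
    c * ddp f x d ≤ ddp f x (c • d) := by
  rcases lt_trichotomy c 0 with hc | rfl | hc
  · have hc' : (0:ℝ) < -c := by linarith
    have h1 := ddp_add hf x (c • d) (-(c • d))
    rw [add_neg_cancel, ddp_zero] at h1
    have h2 : ddp f x (-(c • d)) = -c * ddp f x d := by
      rw [show -(c • d) = (-c) • d by rw [neg_smul], ddp_smul hf x d hc']
    rw [h2] at h1
    linarith
  · rw [zero_smul, ddp_zero, zero_mul]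
  · rw [ddp_smul hf x d hc]
end aux

section auxg
variable {E : Type*} [NormedAddCommGroup E] [InnerProductSpace ℝ E] [CompleteSpace E]

lemma hasDirDeriv_of_gradient {g : E → ℝ} {gx x : E} (hg : HasGradientAt g gx x) (d : E) :
    Tendsto (fun t : ℝ => (g (x + t • d) - g x) / t) (nhdsWithin 0 (Set.Ioi 0))
      (nhds ⟪gx, d⟫) := by
  have hline : HasDerivAt (fun t : ℝ => x + t • d) d 0 := by
    have h1 : HasDerivAt (fun t : ℝ => t • d) ((1:ℝ) • d) 0 :=
      (hasDerivAt_id 0).smul_const d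
    rw [one_smul] at h1
    exact h1.const_add x
  have hcomp : HasDerivAt (fun t : ℝ => g (x + t • d)) ⟪gx, d⟫ 0 := by
    have hx : x + (0:ℝ) • d = x := by simp
    have h0 : HasFDerivAt g ((InnerProductSpace.toDual ℝ E) gx) (x + (0:ℝ) • d) := by
      rw [hx]; exact hg.hasFDerivAt
    have := h0.comp_hasDerivAt 0 hline
    simpa [InnerProductSpace.toDual_apply_apply, Function.comp_def] using this
  have hs := hasDerivAt_iff_tendsto_slope.1 hcomp
  have hs2 := hs.mono_left (nhdsWithin_mono 0 (fun t (ht : t ∈ Set.Ioi 0) =>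
    (ne_of_gt ht : t ≠ 0)))
  refine hs2.congr' ?_
  filter_upwards [self_mem_nhdsWithin] with t ht
  simp [slope, sub_zero, div_eq_inv_mul]
end auxg

/-- For `g, h : ℝ^m → ℝ` convex with `g` differentiable on `ℝ^m` and `φ = g - h`,
a point `x*` satisfies `∂h(x*) = {∇g(x*)}` iff the one-sided directional derivative
`φ'(x*; d)` exists and equals `0` for every direction `d`. -/
theorem stmt1 {m : ℕ} (g h : EuclideanSpace ℝ (Fin m) → ℝ)
    (g' : EuclideanSpace ℝ (Fin m) → EuclideanSpace ℝ (Fin m))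
    (hg : ConvexOn ℝ Set.univ g) (hh : ConvexOn ℝ Set.univ h)
    (hg' : ∀ x, HasGradientAt g (g' x) x)
    (xs : EuclideanSpace ℝ (Fin m)) :
    subdiff h xs = {g' xs} ↔
      ∀ d : EuclideanSpace ℝ (Fin m), HasDirDeriv (fun x => g x - h x) xs d 0 := by
  have hG : ∀ d, Tendsto (fun t : ℝ => (g (xs + t • d) - g xs) / t)
      (nhdsWithin 0 (Set.Ioi 0)) (nhds ⟪g' xs, d⟫) :=
    fun d => hasDirDeriv_of_gradient (hg' xs) d
  have key : ∀ d, HasDirDeriv (fun x => g x - h x) xs d 0 ↔ ddp h xs d = ⟪g' xs, d⟫ := by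
    intro d
    constructor
    · intro hd
      have h3 := (hG d).sub hd
      rw [sub_zero] at h3
      have h4 : Tendsto (fun t : ℝ => (h (xs + t • d) - h xs) / t)
          (nhdsWithin 0 (Set.Ioi 0)) (nhds ⟪g' xs, d⟫) := by
        refine h3.congr fun t => ?_
        rw [div_sub_div_same]
        congr 1
        ring
      exact tendsto_nhds_unique (hasDirDeriv_of_convex hh xs d) h4
    · intro he
      have h3 := (hG d).sub (hasDirDeriv_of_convex hh xs d)
      rw [he, sub_self] at h3
      refine h3.congr fun t => ?_
      rw [div_sub_div_same]
      congr 1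
      ring
  constructor
  · intro hsub d
    rw [key d]
    by_cases hd0 : d = 0
    · subst hd0; rw [ddp_zero, inner_zero_right]
    · -- Hahn–Banach extension of the linear functional c • d ↦ c * ddp h xs d
      have Hc : ∀ c : ℝ, c • d = 0 → c • ddp h xs d = 0 := by
        intro c hc
        rcases smul_eq_zero.1 hc with rfl | hd
        · rw [zero_smul]
        · exact absurd hd hd0
      set f : (EuclideanSpace ℝ (Fin m)) →ₗ.[ℝ] ℝ :=
        LinearPMap.mkSpanSingleton' d (ddp h xs d) Hc with hf_def
      have hfle : ∀ v : f.domain, f v ≤ ddp h xs v := by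
        rintro ⟨v, hv⟩
        obtain ⟨c, rfl⟩ := Submodule.mem_span_singleton.1 hv
        rw [LinearPMap.mkSpanSingleton'_apply]
        rw [smul_eq_mul]
        exact c_mul_ddp_le hh xs d c
      obtain ⟨F, hF1, hF2⟩ := exists_extension_of_le_sublinear f (ddp h xs)
        (fun c hc v => ddp_smul hh xs v hc) (ddp_add hh xs) hfle
      set w : EuclideanSpace ℝ (Fin m) :=
        (InnerProductSpace.toDual ℝ _).symm (LinearMap.toContinuousLinearMap F) with hw_def
      have hwv : ∀ v, ⟪w, v⟫ = F v := by
        intro v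
        rw [hw_def, InnerProductSpace.toDual_symm_apply]
        rfl
      have hwsub : w ∈ subdiff h xs := by
        intro y
        have h1 : F (y - xs) ≤ ddp h xs (y - xs) := hF2 _
        have h2 : ddp h xs (y - xs) ≤ dq h xs (y - xs) 1 :=
          ddp_le_dq hh xs _ one_pos
        rw [dq, one_smul, add_sub_cancel, div_one] at h2
        rw [hwv]
        linarith
      have hweq : w = g' xs := by
        rw [hsub] at hwsub
        exact hwsub
      have hdmem : d ∈ f.domain := Submodule.mem_span_singleton_self d
      have hFd : F d = ddp h xs d := by
        have := hF1 ⟨d, hdmem⟩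
        rw [this, LinearPMap.mkSpanSingleton'_apply_self]
      rw [← hweq, hwv, hFd]
  · intro hall
    have heq : ∀ d, ddp h xs d = ⟪g' xs, d⟫ := fun d => (key d).1 (hall d)
    ext w
    simp only [Set.mem_singleton_iff]
    constructor
    · intro hw
      have h1 : ∀ d, ⟪w, d⟫ ≤ ⟪g' xs, d⟫ :=
        fun d => (inner_le_ddp hh hw d).trans_eq (heq d)
      have h2 := h1 (w - g' xs)
      have h3 : ⟪w - g' xs, w - g' xs⟫ ≤ 0 := by
        rw [inner_sub_left]
        linarith
      have h4 : w - g' xs = 0 := by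
        have := real_inner_self_nonpos.1 h3
        exact this
      exact sub_eq_zero.1 h4
    · rintro rfl
      intro y
      have h2 : ddp h xs (y - xs) ≤ dq h xs (y - xs) 1 :=
        ddp_le_dq hh xs _ one_pos
      rw [dq, one_smul, add_sub_cancel, div_one] at h2
      rw [← heq (y - xs)]
      linarith
end

section
/- Let g, h : ℝ^m → ℝ be strongly convex with the same parameter ρ > 0, and set φ := g − h. Fix x ∈ ℝ^m, take any u ∈ ∂h(x), and let y be a minimizer over ℝ^m of the function z ↦ g(z) − ⟨u, z⟩. Then φ(y) ≤ φ(x) − ρ‖y − x‖². -/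
/-!
A `ρ`-strongly convex function lies above each of its subgradient lines plus `ρ/2 ‖y - x‖²`.
Applied to `h` at `x` with subgradient `u`, and to the `ρ`-strongly convex function
`g - ⟪u, ·⟫` at its minimizer `y` with subgradient `0`, this gives
`h y ≥ h x + ⟪u, y - x⟫ + ρ/2 ‖y - x‖²` and `g x - ⟪u, x⟫ ≥ g y - ⟪u, y⟫ + ρ/2 ‖y - x‖²`;
adding the two inequalities yields the claim.
-/

open RealInnerProductSpace

open Set Filter Topology

lemma le_of_forall_mem_Ioo_one_sub_mul_le {c A : ℝ}
    (h : ∀ t ∈ Ioo (0 : ℝ) 1, (1 - t) * c ≤ A) : c ≤ A := by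
  have hlim : Tendsto (fun t : ℝ => (1 - t) * c) (𝓝[>] 0) (𝓝 c) := by
    have hcont : Continuous fun t : ℝ => (1 - t) * c := by fun_prop
    simpa using (hcont.tendsto 0).mono_left nhdsWithin_le_nhds
  exact le_of_tendsto hlim (eventually_of_mem (Ioo_mem_nhdsGT one_pos) h)

section InnerProductSpace

variable {E : Type*} [NormedAddCommGroup E] [InnerProductSpace ℝ E] {f : E → ℝ} {m : ℝ}

lemma zero_mem_subdiff_iff {x : E} : 0 ∈ subdiff f x ↔ ∀ y, f x ≤ f y := by
  simp [subdiff]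

lemma StrongConvexOn.sub_inner {s : Set E} (hf : StrongConvexOn s m f) (u : E) :
    StrongConvexOn s m fun z => f z - ⟪u, z⟫ := by
  refine ⟨hf.1, fun x hx y hy a b ha hb hab => ?_⟩
  have := hf.2 hx hy ha hb hab
  simp only [inner_add_right, real_inner_smul_right, smul_eq_mul] at this ⊢
  linarith

lemma StrongConvexOn.add_inner_add_le_of_mem_subdiff (hf : StrongConvexOn univ m f)
    {x w : E} (hw : w ∈ subdiff f x) (y : E) :
    f x + ⟪w, y - x⟫ + m / 2 * ‖y - x‖ ^ 2 ≤ f y := by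
  suffices m / 2 * ‖y - x‖ ^ 2 ≤ f y - f x - ⟪w, y - x⟫ by linarith
  refine le_of_forall_mem_Ioo_one_sub_mul_le fun t ⟨ht0, ht1⟩ => ?_
  have hconv := hf.2 (mem_univ x) (mem_univ y) (sub_nonneg.2 ht1.le) ht0.le (sub_add_cancel 1 t)
  have hsub := hw ((1 - t) • x + t • y)
  rw [show (1 - t) • x + t • y - x = t • (y - x) by module, real_inner_smul_right] at hsub
  rw [smul_eq_mul, smul_eq_mul, norm_sub_rev] at hconv
  refine le_of_mul_le_mul_left ?_ ht0
  linear_combination hsub + hconv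

end InnerProductSpace

theorem stmt4_general {m : ℕ} (g h : EuclideanSpace ℝ (Fin m) → ℝ) (ρ : ℝ)
    (hg : ConvexOn ℝ Set.univ (fun z => g z - ρ / 2 * ‖z‖ ^ 2))
    (hh : ConvexOn ℝ Set.univ (fun z => h z - ρ / 2 * ‖z‖ ^ 2))
    (x u y : EuclideanSpace ℝ (Fin m))
    (hu : u ∈ subdiff h x)
    (hy : ∀ z, g y - ⟪u, y⟫ ≤ g z - ⟪u, z⟫) :
    g y - h y ≤ (g x - h x) - ρ * ‖y - x‖ ^ 2 := by
  have hh_growth := (strongConvexOn_iff_convex.2 hh).add_inner_add_le_of_mem_subdiff hu y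
  have hg_growth := ((strongConvexOn_iff_convex.2 hg).sub_inner u).add_inner_add_le_of_mem_subdiff
    (zero_mem_subdiff_iff.2 hy) x
  rw [inner_zero_left, add_zero, norm_sub_rev] at hg_growth
  rw [inner_sub_right] at hh_growth
  linarith

/-- Let `g, h` be strongly convex with the same parameter `ρ > 0`, `u ∈ ∂h(x)`, and let
`y` minimize `z ↦ g(z) - ⟪u, z⟫` over `ℝ^m`. Then `φ(y) ≤ φ(x) - ρ‖y - x‖²`
where `φ = g - h`. -/
theorem stmt4 {m : ℕ} (g h : EuclideanSpace ℝ (Fin m) → ℝ) (ρ : ℝ) (hρ : 0 < ρ)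
    (hg : ConvexOn ℝ Set.univ (fun z => g z - ρ / 2 * ‖z‖ ^ 2))
    (hh : ConvexOn ℝ Set.univ (fun z => h z - ρ / 2 * ‖z‖ ^ 2))
    (x u y : EuclideanSpace ℝ (Fin m))
    (hu : u ∈ subdiff h x)
    (hy : ∀ z, g y - ⟪u, y⟫ ≤ g z - ⟪u, z⟫) :
    g y - h y ≤ (g x - h x) - ρ * ‖y - x‖ ^ 2 :=
  stmt4_general g h ρ hg hh x u y hu hy
end

section
/- Let g, h : ℝ^m → ℝ be strongly convex with the same parameter ρ > 0 and g differentiable on ℝ^m, and set φ := g − h. Fix x ∈ ℝ^m, take any u ∈ ∂h(x), let y be a minimizer over ℝ^m of z ↦ g(z) − ⟨u, z⟩, and set d := y − x. Then the one-sided directional derivative of φ at y in direction d satisfies φ'(y; d) ≤ −ρ‖d‖². -/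
open RealInnerProductSpace Filter

lemma combo_norm_sq {E : Type*} [NormedAddCommGroup E] [InnerProductSpace ℝ E]
    (x y : E) (t : ℝ) :
    ‖(1-t) • x + t • y‖^2 = (1-t)*‖x‖^2 + t*‖y‖^2 - t*(1-t)*‖y-x‖^2 := by
  have h1 := norm_add_sq_real ((1-t) • x) (t • y)
  have h2 := norm_sub_sq_real y x
  rw [real_inner_smul_left, real_inner_smul_right, norm_smul, norm_smul,
    Real.norm_eq_abs, Real.norm_eq_abs, mul_pow, mul_pow, sq_abs, sq_abs] at h1
  have hx : ⟪y, x⟫ = ⟪x, y⟫ := real_inner_comm x y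
  nlinarith [h1, h2]

set_option maxHeartbeats 1000000 in
/-- Let `g, h` be strongly convex with the same parameter `ρ > 0`, `g` differentiable on
`ℝ^m`, `u ∈ ∂h(x)`, `y` a minimizer of `z ↦ g(z) - ⟪u, z⟫`, and `d := y - x`. Then the
one-sided directional derivative of `φ = g - h` at `y` in direction `d` exists and satisfies
`φ'(y; d) ≤ -ρ‖d‖²`. -/
theorem stmt5 {m : ℕ} (g h : EuclideanSpace ℝ (Fin m) → ℝ) (ρ : ℝ) (hρ : 0 < ρ)
    (g' : EuclideanSpace ℝ (Fin m) → EuclideanSpace ℝ (Fin m))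
    (hg : ConvexOn ℝ Set.univ (fun z => g z - ρ / 2 * ‖z‖ ^ 2))
    (hh : ConvexOn ℝ Set.univ (fun z => h z - ρ / 2 * ‖z‖ ^ 2))
    (hg' : ∀ x, HasGradientAt g (g' x) x)
    (x u y d : EuclideanSpace ℝ (Fin m))
    (hu : u ∈ subdiff h x)
    (hy : ∀ z, g y - ⟪u, y⟫ ≤ g z - ⟪u, z⟫)
    (hd : d = y - x) :
    ∃ L : ℝ, HasDirDeriv (fun z => g z - h z) y d L ∧ L ≤ -ρ * ‖d‖ ^ 2 := by
  -- basic facts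
  have hdn : ‖y - x‖ = ‖d‖ := by rw [hd]
  have hxd : y + (-1 : ℝ) • d = x := by rw [hd]; module
  -- the slope function of h along the line
  set s : ℝ → ℝ := fun t => (h (y + t • d) - h y) / t with hs
  -- convexity of the shifted function along the line
  set F : ℝ → ℝ := fun t => h (y + t • d) - (ρ/2*‖d‖^2)*t^2 - (ρ*⟪y,d⟫)*t with hF
  have qexp : ∀ t : ℝ, ‖y + t • d‖^2 = ‖y‖^2 + 2*t*⟪y,d⟫ + t^2*‖d‖^2 := by
    intro t
    rw [norm_add_sq_real, real_inner_smul_right, norm_smul, Real.norm_eq_abs,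
      mul_pow, sq_abs]
    ring
  have hFconv : ConvexOn ℝ Set.univ F := by
    have hcomp := hh.comp_affineMap
      (AffineMap.lineMap y (y+d) : ℝ →ᵃ[ℝ] (EuclideanSpace ℝ (Fin m)))
    rw [Set.preimage_univ] at hcomp
    have hcomp2 := hcomp.add_const (ρ/2*‖y‖^2)
    convert hcomp2 using 1
    · rfl
    · rfl
    · rfl
    · rfl
    · rfl
    funext t
    simp only [Function.comp_apply, AffineMap.lineMap_apply, Pi.add_apply,
      vsub_eq_sub, vadd_eq_add, hF]
    have he : t • (y + d - y) + y = y + t • d := by module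
    rw [he, qexp t]
    ring
  have hF0 : F 0 = h y := by simp [hF]
  have hFslope : ∀ t : ℝ, t ≠ 0 → (F t - F 0) / (t - 0) = s t - (ρ/2*‖d‖^2)*t - ρ*⟪y,d⟫ := by
    intro t ht
    rw [hF0]
    simp only [hF, hs, sub_zero]
    field_simp
    ring
  -- monotonicity of s on (0, ∞)
  have hmono : MonotoneOn s (Set.Ioi (0:ℝ)) := by
    intro t1 ht1 t2 ht2 h12
    have h1 := hFslope t1 (ne_of_gt ht1)
    have h2 := hFslope t2 (ne_of_gt ht2)
    have := hFconv.secant_mono (Set.mem_univ (0:ℝ)) (Set.mem_univ t1) (Set.mem_univ t2)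
      (ne_of_gt ht1) (ne_of_gt ht2) h12
    rw [h1, h2] at this
    have hnd : (0:ℝ) ≤ ρ/2*‖d‖^2 := by positivity
    nlinarith [mul_le_mul_of_nonneg_left h12 hnd]
  -- lower bound on s
  have hlb : ∀ t : ℝ, t ∈ Set.Ioi (0:ℝ) → h y - h x + ρ/2*‖d‖^2 ≤ s t := by
    intro t ht
    have hsec := hFconv.secant_mono (Set.mem_univ (0:ℝ)) (Set.mem_univ (-1:ℝ)) (Set.mem_univ t)
      (by norm_num) (ne_of_gt ht) (by linarith [Set.mem_Ioi.mp ht])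
    rw [hFslope t (ne_of_gt ht)] at hsec
    have hFm1 : F (-1) = h x - ρ/2*‖d‖^2 + ρ*⟪y,d⟫ := by
      simp only [hF, hxd]; ring
    rw [hFm1, hF0] at hsec
    have h1 : (h x - ρ / 2 * ‖d‖ ^ 2 + ρ * ⟪y,d⟫ - h y) / (-1 - 0)
        = h y - h x + ρ/2*‖d‖^2 - ρ*⟪y,d⟫ := by ring
    rw [h1] at hsec
    have hnd : (0:ℝ) ≤ ρ/2*‖d‖^2 := by positivity
    nlinarith [Set.mem_Ioi.mp ht]
  -- the limit of s
  have hbdd : BddBelow (s '' Set.Ioi (0:ℝ)) := by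
    refine ⟨h y - h x + ρ/2*‖d‖^2, ?_⟩
    rintro v ⟨t, ht, rfl⟩
    exact hlb t ht
  set Lh : ℝ := sInf (s '' Set.Ioi (0:ℝ)) with hLh
  have hLtend : Tendsto s (nhdsWithin 0 (Set.Ioi 0)) (nhds Lh) :=
    hmono.tendsto_nhdsGT hbdd
  have hLhge : h y - h x + ρ/2*‖d‖^2 ≤ Lh := by
    refine le_csInf ⟨s 1, 1, by norm_num, rfl⟩ ?_
    rintro v ⟨t, ht, rfl⟩
    exact hlb t ht
  -- strong subgradient inequality at x
  have key : ⟪u,d⟫ + ρ/2*‖d‖^2 ≤ h y - h x := by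
    have main : ∀ t : ℝ, 0 < t → t < 1 →
        ⟪u,d⟫ ≤ h y - h x - ρ/2*(1-t)*‖d‖^2 := by
      intro t ht0 ht1
      set z : EuclideanSpace ℝ (Fin m) := (1-t) • x + t • y with hz
      have hconv := hh.2 (Set.mem_univ x) (Set.mem_univ y)
        (by linarith : (0:ℝ) ≤ 1 - t) (le_of_lt ht0) (by ring)
      simp only [smul_eq_mul] at hconv
      have hnorm : ‖z‖^2 = (1-t)*‖x‖^2 + t*‖y‖^2 - t*(1-t)*‖d‖^2 := by
        rw [hz, combo_norm_sq, hdn]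
      have hsub := hu z
      have hzx : z - x = t • d := by rw [hz, hd]; module
      rw [hzx, real_inner_smul_right] at hsub
      have hρ2 : (0:ℝ) < ρ/2 := by linarith
      nlinarith [hconv, hsub, hnorm]
    refine le_of_forall_pos_le_add ?_
    intro ε hε
    set t : ℝ := min (1/2) (ε/(ρ/2*‖d‖^2+1)) with htdef
    have hc : (0:ℝ) < ρ/2*‖d‖^2+1 := by positivity
    have ht0 : 0 < t := lt_min (by norm_num) (by positivity)
    have ht1 : t < 1 := lt_of_le_of_lt (min_le_left _ _) (by norm_num)
    have hmain := main t ht0 ht1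
    have hts : t * (ρ/2*‖d‖^2) ≤ ε := by
      have h1 : t ≤ ε/(ρ/2*‖d‖^2+1) := min_le_right _ _
      have h2 : t * (ρ/2*‖d‖^2+1) ≤ ε := (le_div_iff₀ hc).mp h1
      nlinarith
    linarith
  -- gradient of g at y equals u
  have hinner : ∀ w : EuclideanSpace ℝ (Fin m),
      HasGradientAt (fun z : EuclideanSpace ℝ (Fin m) => ⟪u,z⟫) u w := by
    intro w
    rw [hasGradientAt_iff_hasFDerivAt]
    have : ⇑(InnerProductSpace.toDual ℝ (EuclideanSpace ℝ (Fin m)) u)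
        = fun z : EuclideanSpace ℝ (Fin m) => ⟪u,z⟫ := by
      funext z; exact InnerProductSpace.toDual_apply_apply
    rw [← this]
    exact (InnerProductSpace.toDual ℝ (EuclideanSpace ℝ (Fin m)) u).hasFDerivAt
  have hfmin : IsLocalMin (fun z : EuclideanSpace ℝ (Fin m) => g z - ⟪u,z⟫) y :=
    (isMinOn_iff.mpr (fun z _ => hy z)).isLocalMin Filter.univ_mem
  have hfgrad : HasFDerivAt (fun z : EuclideanSpace ℝ (Fin m) => g z - ⟪u,z⟫)
      (InnerProductSpace.toDual ℝ (EuclideanSpace ℝ (Fin m)) (g' y)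
        - InnerProductSpace.toDual ℝ (EuclideanSpace ℝ (Fin m)) u) y :=
    (hasGradientAt_iff_hasFDerivAt.mp (hg' y)).sub (hasGradientAt_iff_hasFDerivAt.mp (hinner y))
  have hgu : g' y = u := by
    have h0 := hfmin.hasFDerivAt_eq_zero hfgrad
    exact (InnerProductSpace.toDual ℝ (EuclideanSpace ℝ (Fin m))).injective (sub_eq_zero.mp h0)
  -- derivative of g along the line
  have hline : HasDerivAt (fun t : ℝ => y + t • d) d 0 := by
    simpa using ((hasDerivAt_id (0:ℝ)).smul_const d).const_add y
  have hgd : HasDerivAt (fun t : ℝ => g (y + t • d)) ⟪u,d⟫ 0 := by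
    have hy0 : y + (0:ℝ) • d = y := by simp
    have hfd : HasFDerivAt g (InnerProductSpace.toDual ℝ (EuclideanSpace ℝ (Fin m)) (g' y))
        (y + (0:ℝ) • d) := by
      rw [hy0]; exact hasGradientAt_iff_hasFDerivAt.mp (hg' y)
    have hcomp := hfd.comp_hasDerivAt (0:ℝ) hline
    have hval : (InnerProductSpace.toDual ℝ (EuclideanSpace ℝ (Fin m)) (g' y)) d = ⟪u,d⟫ := by
      rw [InnerProductSpace.toDual_apply_apply, hgu]
    rw [hval] at hcomp
    exact hcomp
  have hgt : Tendsto (fun t : ℝ => (g (y + t • d) - g y) / t)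
      (nhdsWithin 0 (Set.Ioi 0)) (nhds ⟪u,d⟫) := by
    have h1 := hasDerivAt_iff_tendsto_slope.mp hgd
    have h2 := h1.mono_left (nhdsWithin_mono 0 (fun t ht => Set.mem_compl_singleton_iff.mpr
      (ne_of_gt (Set.mem_Ioi.mp ht))))
    have heq : (slope (fun t : ℝ => g (y + t • d)) 0)
        = fun t : ℝ => (g (y + t • d) - g y) / t := by
      funext t
      rw [slope_def_field]
      simp
    rwa [heq] at h2
  refine ⟨⟪u,d⟫ - Lh, ?_, ?_⟩
  · have htot := hgt.sub hLtend
    have heq : (fun t : ℝ => (g (y + t • d) - g y) / t - s t)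
        = fun t : ℝ => ((g (y + t • d) - h (y + t • d)) - (g y - h y)) / t := by
      funext t
      simp only [hs]
      rw [div_sub_div_same]
      ring_nf
    rw [heq] at htot
    exact htot
  · have : Lh ≥ ⟪u,d⟫ + ρ * ‖d‖^2 := by linarith
    linarith
end

section
/- Let g, h : ℝ^m → ℝ be strongly convex with the same parameter ρ > 0 and g differentiable on ℝ^m, and set φ := g − h. Fix x ∈ ℝ^m, take any u ∈ ∂h(x), let y be a minimizer over ℝ^m of z ↦ g(z) − ⟨u, z⟩, and set d := y − x. Then for every α > 0 there exists δ > 0 such that φ(y + λ d) ≤ φ(y) − α λ² ‖d‖² for all λ ∈ [0, δ). -/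
open RealInnerProductSpace

set_option maxHeartbeats 1600000 in
/-- Let `g, h` be strongly convex with the same parameter `ρ > 0`, `g` differentiable on
`ℝ^m`, `u ∈ ∂h(x)`, `y` a minimizer of `z ↦ g(z) - ⟪u, z⟫`, and `d := y - x`. Then for
every `α > 0` there is `δ > 0` with `φ(y + λd) ≤ φ(y) - αλ²‖d‖²` for all `λ ∈ [0, δ)`,
where `φ = g - h`. -/
theorem stmt6 {m : ℕ} (g h : EuclideanSpace ℝ (Fin m) → ℝ) (ρ : ℝ) (hρ : 0 < ρ)
    (g' : EuclideanSpace ℝ (Fin m) → EuclideanSpace ℝ (Fin m))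
    (hg : ConvexOn ℝ Set.univ (fun z => g z - ρ / 2 * ‖z‖ ^ 2))
    (hh : ConvexOn ℝ Set.univ (fun z => h z - ρ / 2 * ‖z‖ ^ 2))
    (hg' : ∀ x, HasGradientAt g (g' x) x)
    (x u y d : EuclideanSpace ℝ (Fin m))
    (hu : u ∈ subdiff h x)
    (hy : ∀ z, g y - ⟪u, y⟫ ≤ g z - ⟪u, z⟫)
    (hd : d = y - x) :
    ∀ α : ℝ, 0 < α → ∃ δ : ℝ, 0 < δ ∧ ∀ lam : ℝ, lam ∈ Set.Ico (0 : ℝ) δ →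
      g (y + lam • d) - h (y + lam • d) ≤ (g y - h y) - α * lam ^ 2 * ‖d‖ ^ 2 := by
  intro α hα
  rcases eq_or_ne d 0 with hd0 | hd0
  · exact ⟨1, one_pos, fun lam _ => by simp [hd0]⟩
  have hdpos : (0:ℝ) < ‖d‖ ^ 2 := by
    have := norm_pos_iff.mpr hd0; positivity
  -- g' y = u
  have hgy : g' y = u := by
    have hmin : IsLocalMin (fun z => g z - ⟪u, z⟫) y := Filter.Eventually.of_forall hy
    have hF : HasFDerivAt (fun z => g z - ⟪u, z⟫)
        ((InnerProductSpace.toDual ℝ _ (g' y) : _ →L[ℝ] ℝ) - innerSL ℝ u) y :=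
      ((hg' y).hasFDerivAt).sub ((innerSL ℝ u).hasFDerivAt)
    have h0 := hmin.hasFDerivAt_eq_zero hF
    have hv : ∀ v, ⟪g' y - u, v⟫ = 0 := by
      intro v
      have := congrArg (fun L : _ →L[ℝ] ℝ => L v) h0
      simpa [inner_sub_left] using this
    have := hv (g' y - u)
    rwa [inner_self_eq_zero, sub_eq_zero] at this
  -- ⟪y - x, d⟫ = ‖d‖²
  have hdd : ⟪y - x, d⟫ = ‖d‖ ^ 2 := by
    rw [← hd, real_inner_self_eq_norm_sq]
  -- subgradient inequality for the convex part of h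
  have key_sub : ⟪u, d⟫ - ρ * ⟪x, d⟫ ≤
      (h y - ρ / 2 * ‖y‖ ^ 2) - (h x - ρ / 2 * ‖x‖ ^ 2) := by
    have step : ∀ t : ℝ, 0 < t → t ≤ 1 →
        ⟪u, d⟫ - ρ * ⟪x, d⟫ ≤
          (h y - ρ / 2 * ‖y‖ ^ 2) - (h x - ρ / 2 * ‖x‖ ^ 2) + ρ * t / 2 * ‖d‖ ^ 2 := by
      intro t ht ht1
      have hconv := hh.2 (Set.mem_univ x) (Set.mem_univ y)
        (by linarith : (0:ℝ) ≤ 1 - t) (le_of_lt ht) (by ring)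
      have hpt : (1 - t) • x + t • y = x + t • d := by rw [hd]; module
      rw [hpt] at hconv
      have hsub := hu (x + t • d)
      have hnorm : ‖x + t • d‖ ^ 2 = ‖x‖ ^ 2 + 2 * (t * ⟪x, d⟫) + t ^ 2 * ‖d‖ ^ 2 := by
        rw [@norm_add_sq_real, real_inner_smul_right, norm_smul, mul_pow]
        simp [abs_of_nonneg (le_of_lt ht)]
      have hid : ⟪u, x + t • d - x⟫ = t * ⟪u, d⟫ := by
        rw [add_sub_cancel_left, real_inner_smul_right]
      rw [hid] at hsub
      simp only [smul_eq_mul] at hconv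
      rw [hnorm] at hconv
      nlinarith [hconv, hsub, ht, mul_pos ht ht]
    refine sub_le_iff_le_add.mp (le_of_forall_pos_le_add ?_)
    intro ε hε
    have hden : (0:ℝ) < ρ * ‖d‖ ^ 2 + 1 := by positivity
    set t : ℝ := min 1 (ε / (ρ * ‖d‖ ^ 2 + 1)) with htdef
    have ht0 : 0 < t := lt_min one_pos (div_pos hε hden)
    have ht1 : t ≤ 1 := min_le_left _ _
    have ht2 : t ≤ ε / (ρ * ‖d‖ ^ 2 + 1) := min_le_right _ _
    have hbound : ρ * t / 2 * ‖d‖ ^ 2 ≤ ε := by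
      have h1 : t * (ρ * ‖d‖ ^ 2 + 1) ≤ ε := by
        rw [← le_div_iff₀ hden]; exact ht2
      nlinarith [le_of_lt ht0]
    have := step t ht0 ht1
    linarith
  -- key lower bound for h along the ray
  have hkey : ∀ lam : ℝ, 0 ≤ lam →
      h y + lam * ⟪u, d⟫ + lam * ρ * ‖d‖ ^ 2 ≤ h (y + lam • d) := by
    intro lam hlam
    have hpos : (0:ℝ) < 1 + lam := by linarith
    have hcomb : y = (1 / (1 + lam)) • (y + lam • d) + (lam / (1 + lam)) • x := by
      rw [hd]; match_scalars <;> field_simp <;> ring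
    have hconv := hh.2 (Set.mem_univ (y + lam • d)) (Set.mem_univ x)
      (by positivity : (0:ℝ) ≤ 1 / (1 + lam))
      (by positivity : (0:ℝ) ≤ lam / (1 + lam))
      (by field_simp)
    rw [← hcomb] at hconv
    simp only [smul_eq_mul] at hconv
    have hconv' := mul_le_mul_of_nonneg_left hconv (le_of_lt hpos)
    have e1 : (1 + lam) * (1 / (1 + lam)) = 1 := by field_simp
    have e2 : (1 + lam) * (lam / (1 + lam)) = lam := by field_simp
    have hconv'' : (1 + lam) * (h y - ρ / 2 * ‖y‖ ^ 2) ≤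
        (h (y + lam • d) - ρ / 2 * ‖y + lam • d‖ ^ 2)
          + lam * (h x - ρ / 2 * ‖x‖ ^ 2) := by
      calc (1 + lam) * (h y - ρ / 2 * ‖y‖ ^ 2) ≤ _ := hconv'
        _ = (1 + lam) * (1 / (1 + lam)) * (h (y + lam • d) - ρ / 2 * ‖y + lam • d‖ ^ 2)
            + (1 + lam) * (lam / (1 + lam)) * (h x - ρ / 2 * ‖x‖ ^ 2) := by ring
        _ = _ := by rw [e1, e2]; ring
    have hnorm : ‖y + lam • d‖ ^ 2 = ‖y‖ ^ 2 + 2 * (lam * ⟪y, d⟫) + lam ^ 2 * ‖d‖ ^ 2 := by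
      rw [@norm_add_sq_real, real_inner_smul_right, norm_smul, mul_pow]
      simp [abs_of_nonneg hlam]
    have hxy : ⟪y, d⟫ - ⟪x, d⟫ = ‖d‖ ^ 2 := by
      rw [← hdd, inner_sub_left]
    have hB := mul_le_mul_of_nonneg_left key_sub hlam
    have hC' := congrArg (fun s => ρ / 2 * s) hnorm
    have hxy' := congrArg (fun s => lam * ρ * s) hxy
    have hE : 0 ≤ ρ * lam ^ 2 * ‖d‖ ^ 2 :=
      mul_nonneg (mul_nonneg hρ.le (sq_nonneg lam)) hdpos.le
    linarith [hconv'', hB, hC', hxy', hE]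
  -- derivative of g along the ray at 0
  have hψ : HasDerivAt (fun t : ℝ => g (y + t • d)) ⟪u, d⟫ 0 := by
    have hline : HasDerivAt (fun t : ℝ => y + t • d) d 0 := by
      simpa using ((hasDerivAt_id (0:ℝ)).smul_const d).const_add y
    have hFy : HasFDerivAt g (InnerProductSpace.toDual ℝ _ (g' y) : _ →L[ℝ] ℝ)
        ((fun t : ℝ => y + t • d) 0) := by
      simpa using (hg' y).hasFDerivAt
    have := hFy.comp_hasDerivAt 0 hline
    simp [hgy] at this; exact this
  rw [hasDerivAt_iff_tendsto_slope] at hψ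
  have hε : (0:ℝ) < ρ / 2 * ‖d‖ ^ 2 := by positivity
  obtain ⟨δ₁, hδ₁, hδspec⟩ := (Metric.tendsto_nhdsWithin_nhds.mp hψ) _ hε
  refine ⟨min δ₁ (ρ / (2 * α)), lt_min hδ₁ (by positivity), ?_⟩
  rintro lam ⟨hlam0, hlamlt⟩
  rcases eq_or_lt_of_le hlam0 with hlz | hlz
  · simp [← hlz]
  have hl1 : lam < δ₁ := lt_of_lt_of_le hlamlt (min_le_left _ _)
  have hl2 : lam < ρ / (2 * α) := lt_of_lt_of_le hlamlt (min_le_right _ _)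
  have hmem : lam ∈ ({0}ᶜ : Set ℝ) := by simpa using (ne_of_gt hlz)
  have hdist : dist lam 0 < δ₁ := by
    rw [Real.dist_eq, sub_zero, abs_of_pos hlz]; exact hl1
  have hs := hδspec hmem hdist
  rw [Real.dist_eq] at hs
  have hslope : slope (fun t : ℝ => g (y + t • d)) 0 lam
      = (g (y + lam • d) - g y) / lam := by
    rw [slope_def_field]; simp [div_eq_inv_mul]
  rw [hslope] at hs
  have habs := abs_lt.mp hs
  have hgub : g (y + lam • d) - g y < lam * ⟪u, d⟫ + lam * (ρ / 2 * ‖d‖ ^ 2) := by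
    have h2 := habs.2
    have := (div_lt_iff₀ hlz).mp (by linarith : (g (y + lam • d) - g y) / lam < ⟪u, d⟫ + ρ / 2 * ‖d‖ ^ 2)
    linarith [this]
    
  have hhlb := hkey lam hlam0
  have hαlam : α * lam ≤ ρ / 2 := by
    have := (lt_div_iff₀ (by positivity : (0:ℝ) < 2 * α)).mp hl2
    nlinarith
  have hfin := mul_le_mul_of_nonneg_right (mul_le_mul_of_nonneg_right hαlam hlam0) hdpos.le
  linarith [hfin, hgub, hhlb]
end

section
/- Let g, h : ℝ^m → ℝ be strongly convex with the same parameter ρ > 0 and g differentiable on ℝ^m, and set φ := g − h. Fix x ∈ ℝ^m, take any u ∈ ∂h(x), let y be a minimizer over ℝ^m of z ↦ g(z) − ⟨u, z⟩, and set d := y − x. Then for every α > 0 there exists δ > 0 such that φ(y + λ d) ≤ φ(x) − (ρ + α λ²) ‖d‖² for all λ ∈ [0, δ). -/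
open RealInnerProductSpace

/-- Strong-convexity strengthening of the subgradient inequality. -/
theorem subdiff_strong_ineq {E : Type*} [NormedAddCommGroup E] [InnerProductSpace ℝ E]
    (f : E → ℝ) (ρ : ℝ) (hρ : 0 ≤ ρ)
    (hf : ConvexOn ℝ Set.univ (fun z => f z - ρ / 2 * ‖z‖ ^ 2))
    (x w : E) (hw : w ∈ subdiff f x) :
    ∀ z, f x + ⟪w, z - x⟫ + ρ / 2 * ‖z - x‖ ^ 2 ≤ f z := by
  intro z
  set q : E → ℝ := fun z => f z - ρ / 2 * ‖z‖ ^ 2 with hq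
  have hC : (0:ℝ) ≤ ρ / 2 * ‖z - x‖ ^ 2 := by positivity
  have main : ∀ t : ℝ, 0 < t → t ≤ 1 →
      ⟪w, z - x⟫ - ρ * ⟪x, z - x⟫ - t * (ρ / 2 * ‖z - x‖ ^ 2) ≤ q z - q x := by
    intro t ht ht1
    have hcv := hf.2 (Set.mem_univ x) (Set.mem_univ z) (by linarith : (0:ℝ) ≤ 1 - t)
      (le_of_lt ht) (by ring)
    have hpt : (1 - t) • x + t • z = x + t • (z - x) := by module
    rw [hpt] at hcv
    have hsub := hw (x + t • (z - x))
    have hinner : ⟪w, x + t • (z - x) - x⟫ = t * ⟪w, z - x⟫ := by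
      simp [real_inner_smul_right]
    rw [hinner] at hsub
    have hnorm : ‖x + t • (z - x)‖ ^ 2
        = ‖x‖ ^ 2 + 2 * (t * ⟪x, z - x⟫) + t ^ 2 * ‖z - x‖ ^ 2 := by
      rw [norm_add_sq_real, real_inner_smul_right, norm_smul]
      rw [Real.norm_eq_abs, abs_of_pos ht]
      ring
    have hqdef : ∀ v, q v = f v - ρ / 2 * ‖v‖ ^ 2 := fun v => rfl
    simp only [hqdef] at hcv
    rw [hnorm] at hcv
    simp only [smul_eq_mul] at hcv
    have hts : t * (⟪w, z - x⟫ - ρ * ⟪x, z - x⟫ - t * (ρ / 2 * ‖z - x‖ ^ 2))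
        ≤ t * (q z - q x) := by
      rw [hqdef z, hqdef x]; nlinarith [hcv, hsub]
    exact (mul_le_mul_iff_right₀ ht).mp hts
  have lim : ⟪w, z - x⟫ - ρ * ⟪x, z - x⟫ ≤ q z - q x := by
    refine le_of_forall_pos_le_add ?_
    intro ε hε
    set C := ρ / 2 * ‖z - x‖ ^ 2 with hCdef
    rcases le_or_gt C ε with hle | hlt
    · have := main 1 one_pos le_rfl
      linarith
    · have hCpos : 0 < C := lt_of_le_of_lt hε.le hlt
      have ht : 0 < ε / C := div_pos hε hCpos
      have ht1 : ε / C ≤ 1 := by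
        rw [div_le_one hCpos]; linarith
      have := main (ε / C) ht ht1
      rw [div_mul_cancel₀ _ (ne_of_gt hCpos)] at this
      linarith
  have hexp : ‖z - x‖ ^ 2 = ‖z‖ ^ 2 - ‖x‖ ^ 2 - 2 * ⟪x, z - x⟫ := by
    have h1 : ⟪x, z - x⟫ = ⟪x, z⟫ - ‖x‖ ^ 2 := by
      rw [inner_sub_right, real_inner_self_eq_norm_sq]
    rw [norm_sub_sq_real, real_inner_comm, h1]; ring
  have e2 : ‖z‖ ^ 2 = ‖z - x‖ ^ 2 + ‖x‖ ^ 2 + 2 * ⟪x, z - x⟫ := by linarith [hexp]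
  have hqe : q z - q x = f z - f x - ρ / 2 * ‖z - x‖ ^ 2 - ρ * ⟪x, z - x⟫ := by
    show (f z - ρ / 2 * ‖z‖ ^ 2) - (f x - ρ / 2 * ‖x‖ ^ 2) = _
    rw [e2]; ring
  rw [hqe] at lim
  linarith [lim]

/-- Let `g, h` be strongly convex with the same parameter `ρ > 0`, `g` differentiable on
`ℝ^m`, `u ∈ ∂h(x)`, `y` a minimizer of `z ↦ g(z) - ⟪u, z⟫`, and `d := y - x`. Then for
every `α > 0` there is `δ > 0` with `φ(y + λd) ≤ φ(x) - (ρ + αλ²)‖d‖²` for all `λ ∈ [0, δ)`,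
where `φ = g - h`. -/
theorem stmt7 {m : ℕ} (g h : EuclideanSpace ℝ (Fin m) → ℝ) (ρ : ℝ) (hρ : 0 < ρ)
    (g' : EuclideanSpace ℝ (Fin m) → EuclideanSpace ℝ (Fin m))
    (hg : ConvexOn ℝ Set.univ (fun z => g z - ρ / 2 * ‖z‖ ^ 2))
    (hh : ConvexOn ℝ Set.univ (fun z => h z - ρ / 2 * ‖z‖ ^ 2))
    (hg' : ∀ x, HasGradientAt g (g' x) x)
    (x u y d : EuclideanSpace ℝ (Fin m))
    (hu : u ∈ subdiff h x)
    (hy : ∀ z, g y - ⟪u, y⟫ ≤ g z - ⟪u, z⟫)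
    (hd : d = y - x) :
    ∀ α : ℝ, 0 < α → ∃ δ : ℝ, 0 < δ ∧ ∀ lam : ℝ, lam ∈ Set.Ico (0 : ℝ) δ →
      g (y + lam • d) - h (y + lam • d) ≤ (g x - h x) - (ρ + α * lam ^ 2) * ‖d‖ ^ 2 := by
  intro α hα
  -- trivial case d = 0
  by_cases hd0 : d = 0
  · have hyx : y = x := by
      have := hd.symm
      rw [hd0] at this
      exact sub_eq_zero.mp this
    refine ⟨1, one_pos, fun lam _ => ?_⟩
    simp [hd0, hyx]
  -- the strengthened inequality for h
  have hA := subdiff_strong_ineq h ρ hρ.le hh x u hu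
  -- the function ψ z = g z - ⟪u, z⟫ is strongly convex with minimizer y
  have hpsi : ConvexOn ℝ Set.univ (fun z => (g z - ⟪u, z⟫) - ρ / 2 * ‖z‖ ^ 2) := by
    have heq : (fun z : EuclideanSpace ℝ (Fin m) => (g z - ⟪u, z⟫) - ρ / 2 * ‖z‖ ^ 2)
        = fun z => (g z - ρ / 2 * ‖z‖ ^ 2) + (fun z => -⟪u, z⟫) z := by
      funext z; ring
    rw [heq]
    refine hg.add ⟨convex_univ, fun a _ b _ s t hs ht hst => le_of_eq ?_⟩
    simp only [inner_add_right, real_inner_smul_right, smul_eq_mul]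
    ring
  have h0mem : (0 : EuclideanSpace ℝ (Fin m)) ∈ subdiff (fun z => g z - ⟪u, z⟫) y := by
    intro z
    simpa using hy z
  have hB := subdiff_strong_ineq (fun z => g z - ⟪u, z⟫) ρ hρ.le hpsi y 0 h0mem x
  simp only [inner_zero_left, add_zero] at hB
  -- abbreviations
  set n : ℝ := ‖d‖ ^ 2 with hn
  have hnpos : 0 < n := by
    have : 0 < ‖d‖ := norm_pos_iff.mpr hd0
    positivity
  set c : ℝ := ⟪u, d⟫ with hc
  -- F2 : g y ≤ g x + c - ρ/2 * n
  have hxy : ‖x - y‖ ^ 2 = n := by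
    rw [hn, hd, show x - y = -(y - x) from (neg_sub y x).symm, norm_neg]
  have hcuy : ⟪u, y⟫ - ⟪u, x⟫ = c := by
    rw [hc, hd, inner_sub_right]
  have F2 : g y ≤ g x + c - ρ / 2 * n := by
    have := hB
    rw [hxy] at this
    linarith [this, hcuy]
  -- F3 : ∀ lam ≥ 0, h x + (1+lam)*c + ρ/2*(1+lam)^2*n ≤ h (y + lam • d)
  have F3 : ∀ lam : ℝ, 0 ≤ lam →
      h x + (1 + lam) * c + ρ / 2 * ((1 + lam) ^ 2 * n) ≤ h (y + lam • d) := by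
    intro lam hlam
    have hpt : y + lam • d - x = (1 + lam) • d := by
      rw [hd]; module
    have := hA (y + lam • d)
    rw [hpt, real_inner_smul_right] at this
    have hnorm : ‖(1 + lam) • d‖ ^ 2 = (1 + lam) ^ 2 * n := by
      rw [norm_smul, Real.norm_eq_abs, abs_of_nonneg (by linarith), mul_pow, hn]
    rw [hnorm] at this
    linarith [this]
  -- gradient of g at y equals u (in the direction d)
  have hgrad : ⟪g' y, d⟫ = c := by
    have hF : HasFDerivAt (fun z => g z - ⟪u, z⟫)
        (InnerProductSpace.toDual ℝ _ (g' y) - InnerProductSpace.toDual ℝ _ u) y :=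
      ((hg' y).hasFDerivAt).sub ((InnerProductSpace.toDual ℝ _ u).hasFDerivAt)
    have hmin : IsLocalMin (fun z => g z - ⟪u, z⟫) y := Filter.Eventually.of_forall hy
    have h0 := hmin.hasFDerivAt_eq_zero hF
    have := congrArg (fun (T : _ →L[ℝ] ℝ) => T d) h0
    simpa [InnerProductSpace.toDual_apply_apply, inner_sub_left, sub_eq_zero] using this
  -- derivative of lam ↦ g (y + lam • d) at 0
  have hG : HasDerivAt (fun l : ℝ => g (y + l • d)) c 0 := by
    have hline : HasDerivAt (fun l : ℝ => y + l • d) d 0 := by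
      simpa using ((hasDerivAt_id (0:ℝ)).smul_const d).const_add y
    have h0 : y + (0:ℝ) • d = y := by simp
    have hgy : HasFDerivAt g (InnerProductSpace.toDual ℝ _ (g' y)) (y + (0:ℝ) • d) := by
      rw [h0]; exact (hg' y).hasFDerivAt
    have := hgy.comp_hasDerivAt 0 hline
    simpa [InnerProductSpace.toDual_apply_apply, hgrad, Function.comp_def] using this
  -- slope bound: there is δ₀ > 0 with g (y + l • d) ≤ g y + l * (c + ρ/2*n) on (0, δ₀)
  have hslope : ∃ δ₀ > 0, ∀ l : ℝ, 0 < l → l < δ₀ →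
      g (y + l • d) ≤ g y + l * (c + ρ / 2 * n) := by
    have htend := hasDerivAt_iff_tendsto_slope.mp hG
    have hlt : c < c + ρ / 2 * n := by nlinarith
    have hev : {l : ℝ | slope (fun l : ℝ => g (y + l • d)) 0 l < c + ρ / 2 * n}
        ∈ nhdsWithin (0:ℝ) {(0:ℝ)}ᶜ := htend (Iio_mem_nhds hlt)
    rcases Metric.mem_nhdsWithin_iff.mp hev with ⟨δ₀, hδ₀, hball⟩
    refine ⟨δ₀, hδ₀, fun l hl hlδ => ?_⟩
    have hmem : l ∈ Metric.ball (0:ℝ) δ₀ ∩ {(0:ℝ)}ᶜ := by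
      constructor
      · simpa [Real.dist_eq, abs_of_pos hl] using hlδ
      · exact fun hl0 => (ne_of_gt hl) (by simpa using hl0)
    have hsl := hball hmem
    have : (g (y + l • d) - g (y + (0:ℝ) • d)) / l < c + ρ / 2 * n := by
      simpa [slope_def_field] using hsl
    rw [div_lt_iff₀ hl] at this
    simp only [zero_smul, add_zero] at this
    linarith
  rcases hslope with ⟨δ₀, hδ₀, hg_small⟩
  refine ⟨min δ₀ (ρ / (2 * α)), lt_min hδ₀ (by positivity), fun lam hlam => ?_⟩
  obtain ⟨hlam0, hlamδ⟩ := hlam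
  have hlamδ₀ : lam < δ₀ := lt_of_lt_of_le hlamδ (min_le_left _ _)
  have hlamα : lam * α ≤ ρ / 2 := by
    have h1 : lam < ρ / (2 * α) := lt_of_lt_of_le hlamδ (min_le_right _ _)
    have : lam * (2 * α) < ρ := by
      rw [← lt_div_iff₀ (by positivity)]; exact h1
    linarith
  have hF3 := F3 lam hlam0
  rcases eq_or_lt_of_le hlam0 with heq | hlt
  · -- lam = 0
    subst heq
    simp only [zero_smul, add_zero] at hF3 ⊢
    norm_num at hF3 ⊢
    linarith [F2, hF3]
  · have hF1 := hg_small lam hlt hlamδ₀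
    have hkey : α * lam ^ 2 * n ≤ lam * (ρ / 2) * n :=
      mul_le_mul_of_nonneg_right
        (by nlinarith [mul_le_mul_of_nonneg_left hlamα hlt.le]) hnpos.le
    have hnn : 0 ≤ ρ * (lam ^ 2 * n) :=
      mul_nonneg hρ.le (mul_nonneg (sq_nonneg lam) hnpos.le)
    linarith [hF1, hF3, F2, hkey, hnn]
end

section
/- Let g, h : ℝ^m → ℝ be strongly convex with the same parameter ρ > 0 and g continuously differentiable on ℝ^m, set φ := g − h, and fix α > 0. Let (x_k), (y_k) be sequences in ℝ^m and (u_k), (λ_k) sequences with u_k ∈ ∂h(x_k), y_k a minimizer over ℝ^m of z ↦ g(z) − ⟨u_k, z⟩, d_k := y_k − x_k, λ_k ≥ 0, x_{k+1} = y_k + λ_k d_k, and φ(x_{k+1}) ≤ φ(y_k) − α λ_k² ‖d_k‖² for all k. Suppose φ is bounded below on ℝ^m. Then every cluster point x̄ of the sequence (x_k) is a critical point of φ, i.e. ∇g(x̄) ∈ ∂h(x̄). In addition, if φ is coercive (φ(x) → +∞ as ‖x‖ → +∞), then (x_k) has a subsequence converging to a critical point of φ. -/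
open RealInnerProductSpace Filter
open Topology

section aux

variable {E : Type*} [NormedAddCommGroup E] [InnerProductSpace ℝ E] [CompleteSpace E]

lemma subgrad_ineq {f : E → ℝ} {v x : E}
    (hf : ConvexOn ℝ Set.univ f)
    (hv : HasFDerivAt f (InnerProductSpace.toDual ℝ E v) x) (y : E) :
    f x + ⟪v, y - x⟫ ≤ f y := by
  set L : ℝ →ᵃ[ℝ] E := AffineMap.lineMap x y with hL
  have hconv : ConvexOn ℝ Set.univ (f ∘ L) := by
    simpa using hf.comp_affineMap L
  have hLd : HasDerivAt (fun t : ℝ => L t) (y - x) 0 := by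
    simp only [hL, AffineMap.lineMap_apply_module]
    have : HasDerivAt (fun t : ℝ => (1 - t) • x + t • y) (((0:ℝ) - 1) • x + (1:ℝ) • y) 0 :=
      (((hasDerivAt_const (0:ℝ) (1:ℝ)).sub (hasDerivAt_id 0)).smul_const x).add
        ((hasDerivAt_id 0).smul_const y)
    convert this using 1
    module
  have hFd : HasDerivAt (f ∘ L) ⟪v, y - x⟫ 0 := by
    have hx0 : HasFDerivAt f (InnerProductSpace.toDual ℝ E v) (L 0) := by
      simpa [hL] using hv
    have := hx0.comp_hasDerivAt (x := (0:ℝ)) hLd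
    simpa [InnerProductSpace.toDual_apply_apply] using this
  have := hconv.le_slope_of_hasDerivAt (Set.mem_univ 0) (Set.mem_univ 1) zero_lt_one hFd
  rw [slope_def_field] at this
  simp only [Function.comp_apply, hL, AffineMap.lineMap_apply_one,
    AffineMap.lineMap_apply_zero] at this
  have h1 : (f y - f x) / (1 - 0) = f y - f x := by norm_num
  rw [h1] at this
  linarith

lemma hasFDerivAt_inner_right' (u z : E) :
    HasFDerivAt (fun w => ⟪u, w⟫) (InnerProductSpace.toDual ℝ E u) z := by
  have := (InnerProductSpace.toDual ℝ E u).hasFDerivAt (x := z)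
  exact this.congr_of_eventuallyEq (Filter.Eventually.of_forall fun w => by
    simp [InnerProductSpace.toDual_apply_apply])

lemma hasFDerivAt_half_normsq (ρ : ℝ) (z : E) :
    HasFDerivAt (fun w : E => ρ / 2 * ‖w‖ ^ 2) (InnerProductSpace.toDual ℝ E (ρ • z)) z := by
  have h1 : HasFDerivAt (fun w : E => ⟪w, w⟫)
      ((fderivInnerCLM ℝ (z, z)).comp ((ContinuousLinearMap.id ℝ E).prod
        (ContinuousLinearMap.id ℝ E))) z :=
    (hasFDerivAt_id z).inner ℝ (hasFDerivAt_id z)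
  have h2 := h1.const_mul (ρ / 2)
  have h3 : (fun w : E => ρ / 2 * ⟪w, w⟫) = fun w : E => ρ / 2 * ‖w‖ ^ 2 := by
    funext w; rw [real_inner_self_eq_norm_sq]
  rw [h3] at h2
  refine h2.congr_fderiv ?_
  ext w
  simp [fderivInnerCLM_apply, InnerProductSpace.toDual_apply_apply, real_inner_smul_left,
    real_inner_comm z w]
  ring

end aux

/-- For the sequences generated by BDCA (with `g` continuously differentiable and `φ = g - h`
bounded below), every cluster point `x̄` of `(x_k)` is a critical point of `φ`, i.e.
`∇g(x̄) ∈ ∂h(x̄)`. Moreover, if `φ` is coercive then `(x_k)` has a subsequence converging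
to a critical point of `φ`. -/
theorem stmt9 {m : ℕ} (g h : EuclideanSpace ℝ (Fin m) → ℝ) (ρ α : ℝ)
    (hρ : 0 < ρ) (hα : 0 < α)
    (g' : EuclideanSpace ℝ (Fin m) → EuclideanSpace ℝ (Fin m))
    (hg : ConvexOn ℝ Set.univ (fun z => g z - ρ / 2 * ‖z‖ ^ 2))
    (hh : ConvexOn ℝ Set.univ (fun z => h z - ρ / 2 * ‖z‖ ^ 2))
    (hg' : ∀ x, HasGradientAt g (g' x) x)
    (hg'cont : Continuous g')
    (x y d u : ℕ → EuclideanSpace ℝ (Fin m)) (lam : ℕ → ℝ)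
    (hu : ∀ k, u k ∈ subdiff h (x k))
    (hy : ∀ k, ∀ z, g (y k) - ⟪u k, y k⟫ ≤ g z - ⟪u k, z⟫)
    (hd : ∀ k, d k = y k - x k)
    (hlam : ∀ k, 0 ≤ lam k)
    (hx : ∀ k, x (k + 1) = y k + lam k • d k)
    (hdesc : ∀ k, g (x (k + 1)) - h (x (k + 1)) ≤
      (g (y k) - h (y k)) - α * lam k ^ 2 * ‖d k‖ ^ 2)
    (hbdd : ∃ B : ℝ, ∀ z, B ≤ g z - h z) :
    (∀ xb : EuclideanSpace ℝ (Fin m), MapClusterPt xb atTop x → g' xb ∈ subdiff h xb) ∧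
      (Tendsto (fun z => g z - h z) (comap norm atTop) atTop →
        ∃ (xb : EuclideanSpace ℝ (Fin m)) (ψ : ℕ → ℕ), StrictMono ψ ∧
          Tendsto (x ∘ ψ) atTop (nhds xb) ∧ g' xb ∈ subdiff h xb) := by
  classical
  obtain ⟨B, hB⟩ := hbdd
  set D := InnerProductSpace.toDual ℝ (EuclideanSpace ℝ (Fin m)) with hD
  -- gradient at minimizer equals the subgradient
  have hgu : ∀ k, g' (y k) = u k := by
    intro k
    have hFd : HasFDerivAt (fun z => g z - ⟪u k, z⟫) (D (g' (y k)) - D (u k)) (y k) :=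
      ((hg' (y k)).hasFDerivAt).sub (hasFDerivAt_inner_right' (u k) (y k))
    have hmin : IsLocalMin (fun z => g z - ⟪u k, z⟫) (y k) :=
      Filter.Eventually.of_forall (hy k)
    have h0 := hmin.hasFDerivAt_eq_zero hFd
    have h1 : D (g' (y k) - u k) = 0 := by rw [map_sub]; exact h0
    have h2 : g' (y k) - u k = 0 := by
      apply (InnerProductSpace.toDual ℝ (EuclideanSpace ℝ (Fin m))).injective
      rw [map_zero]
      exact h1
    exact sub_eq_zero.mp h2
  -- one step descent
  have hstep : ∀ k, (g (y k) - h (y k)) ≤ (g (x k) - h (x k)) - ρ / 2 * ‖d k‖ ^ 2 := by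
    intro k
    have hlin : ConcaveOn ℝ Set.univ (fun z : EuclideanSpace ℝ (Fin m) => ⟪u k, z⟫) := by
      refine ⟨convex_univ, fun a _ b _ p q hp hq hpq => le_of_eq ?_⟩
      simp only [smul_eq_mul, inner_add_right, real_inner_smul_right]
    have hconv : ConvexOn ℝ Set.univ (fun z : EuclideanSpace ℝ (Fin m) => (g z - ρ / 2 * ‖z‖ ^ 2) - ⟪u k, z⟫) :=
      hg.sub hlin
    have hFd : HasFDerivAt (fun z : EuclideanSpace ℝ (Fin m) => (g z - ρ / 2 * ‖z‖ ^ 2) - ⟪u k, z⟫)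
        (D (-(ρ • y k))) (y k) := by
      have h1 := (((hg' (y k)).hasFDerivAt).sub (hasFDerivAt_half_normsq ρ (y k))).sub
        (hasFDerivAt_inner_right' (u k) (y k))
      refine h1.congr_fderiv ?_
      rw [hD, ← map_sub, ← map_sub]
      congr 1
      rw [hgu k]
      abel
    have key := subgrad_ineq hconv hFd (x k)
    have hsub := hu k (y k)
    have e1 : ⟪-(ρ • y k), x k - y k⟫ = -(ρ * ⟪y k, x k⟫) + ρ * ‖y k‖ ^ 2 := by
      simp only [inner_neg_left, real_inner_smul_left, inner_sub_right,
        real_inner_self_eq_norm_sq]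
      ring
    have e2 : ⟪u k, y k - x k⟫ = ⟪u k, y k⟫ - ⟪u k, x k⟫ := inner_sub_right _ _ _
    have e5 : ρ / 2 * ‖d k‖ ^ 2
        = ρ / 2 * ‖y k‖ ^ 2 - ρ * ⟪y k, x k⟫ + ρ / 2 * ‖x k‖ ^ 2 := by
      rw [hd k, norm_sub_sq_real]; ring
    rw [e1] at key
    rw [e2] at hsub
    linarith
  -- combined descent for the x sequence
  have hφstep : ∀ k, g (x (k + 1)) - h (x (k + 1))
      ≤ (g (x k) - h (x k)) - ρ / 2 * ‖d k‖ ^ 2 := by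
    intro k
    have h1 := hdesc k
    have h2 : 0 ≤ α * lam k ^ 2 * ‖d k‖ ^ 2 := by positivity
    have h3 := hstep k
    linarith
  have hsum : ∀ n, ∑ k ∈ Finset.range n, (ρ / 2 * ‖d k‖ ^ 2)
      ≤ (g (x 0) - h (x 0)) - (g (x n) - h (x n)) := by
    intro n
    induction n with
    | zero => simp
    | succ n ih =>
      rw [Finset.sum_range_succ]
      have := hφstep n
      linarith
  have hmono : ∀ n, g (x n) - h (x n) ≤ g (x 0) - h (x 0) := by
    intro n
    have h1 := hsum n
    have h2 : (0:ℝ) ≤ ∑ k ∈ Finset.range n, (ρ / 2 * ‖d k‖ ^ 2) :=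
      Finset.sum_nonneg fun k _ => by positivity
    linarith
  have hsummable : Summable (fun k => ρ / 2 * ‖d k‖ ^ 2) :=
    summable_of_sum_range_le (c := g (x 0) - h (x 0) - B) (fun k => by positivity)
      (fun n => (hsum n).trans (by have := hB (x n); linarith))
  have hterm : Tendsto (fun k => ρ / 2 * ‖d k‖ ^ 2) atTop (𝓝 0) :=
    hsummable.tendsto_atTop_zero
  have hsq : Tendsto (fun k => ‖d k‖ ^ 2) atTop (𝓝 0) := by
    have h2 := hterm.const_mul (2 / ρ)
    rw [mul_zero] at h2
    refine h2.congr fun k => ?_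
    field_simp
  have hnorm : Tendsto (fun k => ‖d k‖) atTop (𝓝 0) := by
    have h1 := hsq.sqrt
    rw [Real.sqrt_zero] at h1
    exact h1.congr fun k => Real.sqrt_sq (norm_nonneg _)
  have hd0 : Tendsto d atTop (𝓝 (0 : EuclideanSpace ℝ (Fin m))) := tendsto_zero_iff_norm_tendsto_zero.mpr hnorm
  have hhc : Continuous h := by
    have h1 : Continuous (fun z : EuclideanSpace ℝ (Fin m) => h z - ρ / 2 * ‖z‖ ^ 2) := by
      rw [← continuousOn_univ]
      exact hh.continuousOn isOpen_univ
    have h2 : Continuous (fun z : EuclideanSpace ℝ (Fin m) => ρ / 2 * ‖z‖ ^ 2) := by fun_prop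
    have h3 : h = fun z => (h z - ρ / 2 * ‖z‖ ^ 2) + ρ / 2 * ‖z‖ ^ 2 := by funext z; ring
    rw [h3]
    exact h1.add h2
  have key : ∀ xb : EuclideanSpace ℝ (Fin m), MapClusterPt xb atTop x → g' xb ∈ subdiff h xb := by
    intro xb hcl
    obtain ⟨ψ, hψ, hten⟩ := TopologicalSpace.FirstCountableTopology.tendsto_subseq hcl
    have hψtop : Tendsto ψ atTop atTop := hψ.tendsto_atTop
    have hdψ : Tendsto (fun j => d (ψ j)) atTop (𝓝 (0 : EuclideanSpace ℝ (Fin m))) := hd0.comp hψtop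
    have hyψ : Tendsto (fun j => y (ψ j)) atTop (𝓝 xb) := by
      have heq : (fun j => y (ψ j)) = fun j => (x ∘ ψ) j + d (ψ j) := by
        funext j
        rw [hd (ψ j)]
        simp only [Function.comp_apply]
        abel
      rw [heq]
      simpa using hten.add hdψ
    have huψ : Tendsto (fun j => u (ψ j)) atTop (𝓝 (g' xb)) := by
      have heq : (fun j => u (ψ j)) = fun j => g' (y (ψ j)) := by
        funext j; rw [hgu (ψ j)]
      rw [heq]
      exact (hg'cont.tendsto xb).comp hyψ
    intro z
    have hev : ∀ j, h (x (ψ j)) + ⟪u (ψ j), z - x (ψ j)⟫ ≤ h z := fun j => hu (ψ j) z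
    have hlim : Tendsto (fun j => h (x (ψ j)) + ⟪u (ψ j), z - x (ψ j)⟫) atTop
        (𝓝 (h xb + ⟪g' xb, z - xb⟫)) := by
      refine Tendsto.add ?_ ?_
      · exact (hhc.tendsto xb).comp hten
      · exact huψ.inner (tendsto_const_nhds.sub hten)
    exact le_of_tendsto hlim (Filter.Eventually.of_forall hev)
  refine ⟨key, fun hco => ?_⟩
  have hev := hco.eventually (eventually_gt_atTop (g (x 0) - h (x 0)))
  rw [eventually_comap] at hev
  obtain ⟨R, hR⟩ := eventually_atTop.mp hev
  have hball : ∀ k, x k ∈ Metric.closedBall (0 : EuclideanSpace ℝ (Fin m)) R := by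
    intro k
    rw [Metric.mem_closedBall, dist_zero_right]
    by_contra hk
    push_neg at hk
    exact absurd (hmono k) (not_le.mpr (hR ‖x k‖ hk.le (x k) rfl))
  obtain ⟨a, -, ψ, hψ, hten⟩ := tendsto_subseq_of_bounded Metric.isBounded_closedBall hball
  exact ⟨a, ψ, hψ, hten, key a (MapClusterPt.of_comp hψ.tendsto_atTop hten.mapClusterPt)⟩
end

section
/- Let g, h : ℝ^m → ℝ be strongly convex with the same parameter ρ > 0 and g differentiable on ℝ^m, set φ := g − h, and fix α > 0. Let (x_k), (y_k) be sequences in ℝ^m and (u_k), (λ_k) sequences with u_k ∈ ∂h(x_k), y_k a minimizer over ℝ^m of z ↦ g(z) − ⟨u_k, z⟩, d_k := y_k − x_k, λ_k ≥ 0, x_{k+1} = y_k + λ_k d_k, and φ(x_{k+1}) ≤ φ(y_k) − α λ_k² ‖d_k‖² for all k. Suppose φ is bounded below on ℝ^m. Then Σ_{k=0}^{∞} ‖d_k‖² < +∞. Furthermore, if there exists λ̄ ≥ 0 with λ_k ≤ λ̄ for all k, then Σ_{k=0}^{∞} ‖x_{k+1} − x_k‖² < +∞. -/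
/-!
The minimality of `y_k` says that `u_k ∈ ∂g(y_k)`, and `u_k ∈ ∂h(x_k)`. For a `ρ`-strongly convex
function the subgradient inequality holds with the extra term `ρ/2 ‖z - x‖²`; adding the two
strengthened inequalities gives `φ(y_k) ≤ φ(x_k) - ρ ‖d_k‖²`, so together with the line search
`φ(x_{k+1}) + ρ ‖d_k‖² ≤ φ(x_k)`. Telescoping against the lower bound of `φ` bounds the partial
sums of `ρ ‖d_k‖²`. Finally `x_{k+1} - x_k = (1 + λ_k) d_k`.
-/

open RealInnerProductSpace Filter

open Set Topology

section StrongConvexity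

variable {E : Type*} [NormedAddCommGroup E] [InnerProductSpace ℝ E]

lemma StrongConvexOn.le_of_mem_subdiff {f : E → ℝ} {m : ℝ} (hf : StrongConvexOn univ m f)
    {x w : E} (hw : w ∈ subdiff f x) (z : E) :
    f x + ⟪w, z - x⟫ + m / 2 * ‖z - x‖ ^ 2 ≤ f z := by
  have along_segment : ∀ t ∈ Ioc (0 : ℝ) 1,
      m / 2 * ‖z - x‖ ^ 2 * (1 - t) ≤ f z - f x - ⟪w, z - x⟫ := by
    rintro t ⟨ht₀, ht₁⟩
    have hconv := hf.2 (mem_univ x) (mem_univ z) (sub_nonneg.2 ht₁) ht₀.le (sub_add_cancel 1 t)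
    have hsub := hw ((1 - t) • x + t • z)
    have hdir : (1 - t) • x + t • z - x = t • (z - x) := by module
    rw [hdir, real_inner_smul_right] at hsub
    rw [norm_sub_rev] at hconv
    simp only [smul_eq_mul] at hconv
    have : t * (m / 2 * ‖z - x‖ ^ 2 * (1 - t)) ≤ t * (f z - f x - ⟪w, z - x⟫) := by
      linarith
    exact le_of_mul_le_mul_left this ht₀
  have hlim : Tendsto (fun t : ℝ => m / 2 * ‖z - x‖ ^ 2 * (1 - t)) (𝓝[>] 0)
      (𝓝 (m / 2 * ‖z - x‖ ^ 2)) := by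
    refine tendsto_nhdsWithin_of_tendsto_nhds ((Continuous.tendsto' ?_ 0 _) (by simp))
    fun_prop
  have := le_of_tendsto hlim (eventually_of_mem (Ioc_mem_nhdsGT one_pos) along_segment)
  linarith

lemma mem_subdiff_of_forall_sub_inner_le {f : E → ℝ} {u y : E}
    (hy : ∀ z, f y - ⟪u, y⟫ ≤ f z - ⟪u, z⟫) : u ∈ subdiff f y := fun z => by
  have := hy z
  rw [inner_sub_right]
  linarith

lemma dca_descent {g h : E → ℝ} {ρ : ℝ} (hg : StrongConvexOn univ ρ g)
    (hh : StrongConvexOn univ ρ h) {x y u : E} (hux : u ∈ subdiff h x) (huy : u ∈ subdiff g y) :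
    g y - h y ≤ g x - h x - ρ * ‖y - x‖ ^ 2 := by
  have hh_ineq := hh.le_of_mem_subdiff hux y
  have hg_ineq := hg.le_of_mem_subdiff huy x
  rw [norm_sub_rev, ← neg_sub y x, inner_neg_right] at hg_ineq
  linarith

end StrongConvexity

lemma summable_of_add_le_of_forall_le {a c : ℕ → ℝ} {B : ℝ} (hc : ∀ k, 0 ≤ c k)
    (hstep : ∀ k, a (k + 1) + c k ≤ a k) (hB : ∀ k, B ≤ a k) : Summable c := by
  refine summable_of_sum_range_le hc (c := a 0 - B) fun n => ?_
  calc ∑ k ∈ Finset.range n, c k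
      ≤ ∑ k ∈ Finset.range n, (a k - a (k + 1)) :=
        Finset.sum_le_sum fun k _ => by linarith [hstep k]
    _ = a 0 - a n := Finset.sum_range_sub' a n
    _ ≤ a 0 - B := by linarith [hB n]

theorem stmt10_general {m : ℕ} (g h : EuclideanSpace ℝ (Fin m) → ℝ) (ρ α : ℝ)
    (hρ : 0 < ρ) (hα : 0 < α)
    (hg : ConvexOn ℝ Set.univ (fun z => g z - ρ / 2 * ‖z‖ ^ 2))
    (hh : ConvexOn ℝ Set.univ (fun z => h z - ρ / 2 * ‖z‖ ^ 2))
    (x y d u : ℕ → EuclideanSpace ℝ (Fin m)) (lam : ℕ → ℝ)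
    (hu : ∀ k, u k ∈ subdiff h (x k))
    (hy : ∀ k, ∀ z, g (y k) - ⟪u k, y k⟫ ≤ g z - ⟪u k, z⟫)
    (hd : ∀ k, d k = y k - x k)
    (hlam : ∀ k, 0 ≤ lam k)
    (hx : ∀ k, x (k + 1) = y k + lam k • d k)
    (hdesc : ∀ k, g (x (k + 1)) - h (x (k + 1)) ≤
      (g (y k) - h (y k)) - α * lam k ^ 2 * ‖d k‖ ^ 2)
    (hbdd : ∃ B : ℝ, ∀ z, B ≤ g z - h z) :
    Summable (fun k => ‖d k‖ ^ 2) ∧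
      ((∃ lb : ℝ, 0 ≤ lb ∧ ∀ k, lam k ≤ lb) →
        Summable (fun k => ‖x (k + 1) - x k‖ ^ 2)) := by
  have hdecrease : ∀ k, g (x (k + 1)) - h (x (k + 1)) + ρ * ‖d k‖ ^ 2 ≤ g (x k) - h (x k) := by
    intro k
    have hstep := dca_descent (strongConvexOn_iff_convex.2 hg) (strongConvexOn_iff_convex.2 hh)
      (hu k) (mem_subdiff_of_forall_sub_inner_le (hy k))
    have : 0 ≤ α * lam k ^ 2 * ‖d k‖ ^ 2 := by positivity
    rw [← hd k] at hstep
    linarith [hdesc k]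
  obtain ⟨B, hB⟩ := hbdd
  have hd_summable : Summable (fun k => ‖d k‖ ^ 2) :=
    (summable_mul_left_iff hρ.ne').1 <|
      summable_of_add_le_of_forall_le (fun k => by positivity) hdecrease (fun k => hB (x k))
  refine ⟨hd_summable, fun ⟨lb, _, hlb⟩ => ?_⟩
  refine .of_nonneg_of_le (fun k => by positivity) (fun k => ?_)
    (hd_summable.mul_left ((1 + lb) ^ 2))
  rw [show x (k + 1) - x k = (1 + lam k) • d k by rw [hx k, hd k]; module,
    norm_smul, mul_pow, Real.norm_eq_abs, sq_abs]
  have := hlam k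
  gcongr
  exact hlb k

/-- For the sequences generated by BDCA with `φ = g - h` bounded below, one has
`Σ ‖d_k‖² < ∞`; moreover, if the step sizes `λ_k` are uniformly bounded by some `λ̄ ≥ 0`,
then `Σ ‖x_{k+1} - x_k‖² < ∞`. -/
theorem stmt10 {m : ℕ} (g h : EuclideanSpace ℝ (Fin m) → ℝ) (ρ α : ℝ)
    (hρ : 0 < ρ) (hα : 0 < α)
    (g' : EuclideanSpace ℝ (Fin m) → EuclideanSpace ℝ (Fin m))
    (hg : ConvexOn ℝ Set.univ (fun z => g z - ρ / 2 * ‖z‖ ^ 2))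
    (hh : ConvexOn ℝ Set.univ (fun z => h z - ρ / 2 * ‖z‖ ^ 2))
    (hg' : ∀ x, HasGradientAt g (g' x) x)
    (x y d u : ℕ → EuclideanSpace ℝ (Fin m)) (lam : ℕ → ℝ)
    (hu : ∀ k, u k ∈ subdiff h (x k))
    (hy : ∀ k, ∀ z, g (y k) - ⟪u k, y k⟫ ≤ g z - ⟪u k, z⟫)
    (hd : ∀ k, d k = y k - x k)
    (hlam : ∀ k, 0 ≤ lam k)
    (hx : ∀ k, x (k + 1) = y k + lam k • d k)
    (hdesc : ∀ k, g (x (k + 1)) - h (x (k + 1)) ≤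
      (g (y k) - h (y k)) - α * lam k ^ 2 * ‖d k‖ ^ 2)
    (hbdd : ∃ B : ℝ, ∀ z, B ≤ g z - h z) :
    Summable (fun k => ‖d k‖ ^ 2) ∧
      ((∃ lb : ℝ, 0 ≤ lb ∧ ∀ k, lam k ≤ lb) →
        Summable (fun k => ‖x (k + 1) - x k‖ ^ 2)) :=
  stmt10_general g h ρ α hρ hα hg hh x y d u lam hu hy hd hlam hx hdesc hbdd
end

section
/- Let g, h : ℝ^m → ℝ be convex with g differentiable on ℝ^m, set φ := g − h, and let {v₁, v₂, …, v_r} be a positive spanning set of ℝ^m. Then a point x* ∈ ℝ^m satisfies ∂h(x*) = {∇g(x*)} if and only if the one-sided directional derivatives satisfy φ'(x*; v_i) ≥ 0 for all i = 1, 2, …, r. -/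
open RealInnerProductSpace Filter

open Set in
section
section aux
variable {E : Type*} [NormedAddCommGroup E] [NormedSpace ℝ E]
variable (F : E → ℝ) (x d : E)

noncomputable def dderiv : ℝ :=
  sInf ((fun t : ℝ => (F (x + t • d) - F x) / t) '' Set.Ioi 0)

lemma line_convexOn (hF : ConvexOn ℝ Set.univ F) :
    ConvexOn ℝ Set.univ (fun t : ℝ => F (x + t • d)) := by
  have h := hF.comp_affineMap (AffineMap.lineMap x (x + d))
  have e : (F ∘ ⇑(AffineMap.lineMap x (x + d))) = fun t : ℝ => F (x + t • d) := by
    funext t; simp [AffineMap.lineMap_apply, add_sub_cancel_left, add_comm]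
  simpa [e] using h

lemma slope_eq (t : ℝ) :
    slope (fun s : ℝ => F (x + s • d)) 0 t = (F (x + t • d) - F x) / t := by
  simp [slope_def_field]

lemma slope_mono' (hF : ConvexOn ℝ Set.univ F) :
    MonotoneOn (slope (fun s : ℝ => F (x + s • d)) 0) (Set.univ \ {0} : Set ℝ) := by
  simpa using (line_convexOn F x d hF).slope_mono (Set.mem_univ (0:ℝ))

lemma quot_lower (hF : ConvexOn ℝ Set.univ F) {t : ℝ} (ht : 0 < t) :
    F x - F (x - d) ≤ (F (x + t • d) - F x) / t := by
  have h := slope_mono' F x d hF (by simp : (-1:ℝ) ∈ Set.univ \ {0})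
    (by simp [ht.ne'] : t ∈ Set.univ \ {0}) (by linarith)
  rw [slope_eq, slope_eq] at h
  have e : (F (x + (-1:ℝ) • d) - F x) / (-1) = F x - F (x - d) := by
    rw [neg_one_smul, ← sub_eq_add_neg]; ring
  linarith [e ▸ h]
end aux

section aux2
open RealInnerProductSpace
variable {E : Type*} [NormedAddCommGroup E] [NormedSpace ℝ E]
variable {F G : E → ℝ} {x d : E}

lemma bddBelow_quot (hF : ConvexOn ℝ Set.univ F) :
    BddBelow ((fun t : ℝ => (F (x + t • d) - F x) / t) '' Set.Ioi 0) := by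
  refine ⟨F x - F (x - d), ?_⟩
  rintro y ⟨t, ht, rfl⟩
  exact quot_lower F x d hF ht

lemma nonempty_quot :
    ((fun t : ℝ => (F (x + t • d) - F x) / t) '' Set.Ioi 0).Nonempty :=
  ⟨_, ⟨1, by norm_num, rfl⟩⟩

lemma dderiv_le (hF : ConvexOn ℝ Set.univ F) {t : ℝ} (ht : 0 < t) :
    dderiv F x d ≤ (F (x + t • d) - F x) / t :=
  csInf_le (bddBelow_quot hF) ⟨t, ht, rfl⟩

lemma le_dderiv {c : ℝ} (hc : ∀ t : ℝ, 0 < t → c ≤ (F (x + t • d) - F x) / t) :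
    c ≤ dderiv F x d :=
  le_csInf nonempty_quot (by rintro y ⟨t, ht, rfl⟩; exact hc t ht)

lemma hasDirDeriv_dderiv (hF : ConvexOn ℝ Set.univ F) :
    HasDirDeriv F x d (dderiv F x d) := by
  have hmono : MonotoneOn (fun t : ℝ => (F (x + t • d) - F x) / t) (Set.Ioi 0) := by
    intro a ha b hb hab
    have h := slope_mono' F x d hF (by simp [ne_of_gt (Set.mem_Ioi.1 ha)] : a ∈ Set.univ \ {0})
      (by simp [ne_of_gt (Set.mem_Ioi.1 hb)] : b ∈ Set.univ \ {0}) hab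
    rwa [slope_eq, slope_eq] at h
  have := hmono.tendsto_nhdsGT (by simpa using bddBelow_quot (x := x) (d := d) hF)
  exact this

lemma hasDirDeriv_unique {L L' : ℝ} (h1 : HasDirDeriv F x d L) (h2 : HasDirDeriv F x d L') :
    L = L' := tendsto_nhds_unique h1 h2

lemma sub_le_dderiv_neg (hF : ConvexOn ℝ Set.univ F) :
    F x - F (x + d) ≤ dderiv F x (-d) := by
  refine le_dderiv fun t ht => ?_
  have h := slope_mono' F x d hF (by simp [ne_of_gt ht, ht.ne] : -t ∈ Set.univ \ {0})
    (by simp : (1:ℝ) ∈ Set.univ \ {0}) (by linarith)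
  rw [slope_eq, slope_eq] at h
  have e1 : x + (-t) • d = x + t • (-d) := by rw [neg_smul, smul_neg]
  have e2 : (F (x + (-t) • d) - F x) / (-t) = -((F (x + t • (-d)) - F x) / t) := by
    rw [e1, div_neg]
  have e3 : (F (x + (1:ℝ) • d) - F x) / 1 = F (x + d) - F x := by simp
  rw [e2, e3] at h
  have := neg_le_neg h
  rw [neg_neg] at this
  linarith

end aux2

section aux3
open RealInnerProductSpace
variable {E : Type*} [NormedAddCommGroup E] [NormedSpace ℝ E]
variable {F : E → ℝ} {x d d₁ d₂ : E} {L L₁ L₂ c : ℝ}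

lemma tendsto_mul_nhdsWithin (hc : 0 < c) :
    Tendsto (fun t : ℝ => c * t) (nhdsWithin 0 (Set.Ioi 0)) (nhdsWithin 0 (Set.Ioi 0)) := by
  rw [tendsto_nhdsWithin_iff]
  constructor
  · have : Tendsto (fun t : ℝ => c * t) (nhds 0) (nhds (c * 0)) :=
      (tendsto_id.const_mul c)
    simpa using this.mono_left nhdsWithin_le_nhds
  · filter_upwards [self_mem_nhdsWithin] with t ht
    exact mul_pos hc ht

lemma hasDirDeriv_scaled (h : HasDirDeriv F x d L) (hc : 0 < c) :
    Tendsto (fun t : ℝ => (F (x + (c * t) • d) - F x) / (c * t))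
      (nhdsWithin 0 (Set.Ioi 0)) (nhds L) :=
  h.comp (tendsto_mul_nhdsWithin hc)

lemma hasDirDeriv_smul (h : HasDirDeriv F x d L) (hc : 0 < c) :
    HasDirDeriv F x (c • d) (c * L) := by
  have h2 := (hasDirDeriv_scaled h hc).const_mul c
  refine h2.congr' ?_
  filter_upwards [self_mem_nhdsWithin] with t ht
  have htne : (t:ℝ) ≠ 0 := ne_of_gt ht
  have e : (c * t) • d = t • (c • d) := by rw [smul_smul, mul_comm]
  rw [e]
  field_simp

lemma hasDirDeriv_zero' : HasDirDeriv F x (0 : E) 0 := by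
  have : (fun t : ℝ => (F (x + t • (0:E)) - F x) / t) = fun _ => (0:ℝ) := by
    funext t; simp
  rw [HasDirDeriv, this]
  exact tendsto_const_nhds

lemma dderiv_zero (hF : ConvexOn ℝ Set.univ F) : dderiv F x (0 : E) = 0 :=
  hasDirDeriv_unique (hasDirDeriv_dderiv hF) hasDirDeriv_zero'

lemma dderiv_smul (hF : ConvexOn ℝ Set.univ F) (hc : 0 < c) :
    dderiv F x (c • d) = c * dderiv F x d :=
  hasDirDeriv_unique (hasDirDeriv_dderiv hF) (hasDirDeriv_smul (hasDirDeriv_dderiv hF) hc)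

lemma dderiv_add_le (hF : ConvexOn ℝ Set.univ F) :
    dderiv F x (d₁ + d₂) ≤ dderiv F x d₁ + dderiv F x d₂ := by
  have h1 := hasDirDeriv_scaled (hasDirDeriv_dderiv hF (x := x) (d := d₁)) (by norm_num : (0:ℝ) < 2)
  have h2 := hasDirDeriv_scaled (hasDirDeriv_dderiv hF (x := x) (d := d₂)) (by norm_num : (0:ℝ) < 2)
  have h0 := hasDirDeriv_dderiv hF (x := x) (d := d₁ + d₂)
  refine le_of_tendsto_of_tendsto h0 (h1.add h2) ?_
  filter_upwards [self_mem_nhdsWithin] with t ht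
  have htne : (t:ℝ) ≠ 0 := ne_of_gt ht
  have key : F (x + t • (d₁ + d₂)) ≤
      (1/2 : ℝ) * F (x + (2*t) • d₁) + (1/2 : ℝ) * F (x + (2*t) • d₂) := by
    have := hF.2 (Set.mem_univ (x + (2*t) • d₁)) (Set.mem_univ (x + (2*t) • d₂))
      (by norm_num : (0:ℝ) ≤ 1/2) (by norm_num : (0:ℝ) ≤ 1/2) (by norm_num)
    have e : (1/2 : ℝ) • (x + (2*t) • d₁) + (1/2 : ℝ) • (x + (2*t) • d₂)
        = x + t • (d₁ + d₂) := by
      rw [smul_add, smul_add, smul_smul, smul_smul, smul_add]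
      module
    rw [e] at this
    simpa [smul_eq_mul] using this
  show (F (x + t • (d₁ + d₂)) - F x) / t ≤ _
  have ht' : (0:ℝ) < t := ht
  rw [← add_div, div_le_div_iff₀ ht' (by linarith)]
  nlinarith [mul_le_mul_of_nonneg_right key ht'.le]
end aux3

section aux4
open RealInnerProductSpace
variable {E : Type*} [NormedAddCommGroup E] [InnerProductSpace ℝ E] [CompleteSpace E]
variable {g : E → ℝ} {G x d : E}

lemma hasDirDeriv_of_gradient_s11 (hg : HasGradientAt g G x) :
    HasDirDeriv g x d ⟪G, d⟫ := by
  have hfd : HasFDerivAt g (InnerProductSpace.toDual ℝ E G) x := hg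
  have hline : HasDerivAt (fun t : ℝ => x + t • d) d 0 := by
    have h1 : HasDerivAt (fun t : ℝ => t • d) ((1:ℝ) • d) 0 :=
      (hasDerivAt_id (0:ℝ)).smul_const d
    rw [one_smul] at h1
    exact h1.const_add x
  have hfd' : HasFDerivAt g (InnerProductSpace.toDual ℝ E G) ((fun t : ℝ => x + t • d) 0) := by
    simpa using hfd
  have hcomp : HasDerivAt (fun t : ℝ => g (x + t • d)) (InnerProductSpace.toDual ℝ E G d) 0 :=
    hfd'.comp_hasDerivAt 0 hline
  rw [InnerProductSpace.toDual_apply_apply] at hcomp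
  have := hasDerivAt_iff_tendsto_slope.1 hcomp
  have h2 : Tendsto (slope (fun t : ℝ => g (x + t • d)) 0) (nhdsWithin 0 (Set.Ioi 0)) (nhds ⟪G, d⟫) :=
    this.mono_left (nhdsWithin_mono 0 (fun t ht => ne_of_gt ht))
  refine h2.congr fun t => ?_
  exact slope_eq g x d t

omit [CompleteSpace E] in
lemma hasDirDeriv_sub {h : E → ℝ} {Lg Lh : ℝ} (h1 : HasDirDeriv g x d Lg)
    (h2 : HasDirDeriv h x d Lh) :
    HasDirDeriv (fun z => g z - h z) x d (Lg - Lh) := by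
  refine (Filter.Tendsto.sub h1 h2).congr fun t => ?_
  ring
end aux4

end

/-- Let `g, h` be convex with `g` differentiable on `ℝ^m`, `φ = g - h`, and let
`{v₁, …, v_r}` be a positive spanning set of `ℝ^m`. Then `x*` satisfies
`∂h(x*) = {∇g(x*)}` iff `φ'(x*; v_i) ≥ 0` for every `i`. -/
theorem stmt11 {m r : ℕ} (g h : EuclideanSpace ℝ (Fin m) → ℝ)
    (g' : EuclideanSpace ℝ (Fin m) → EuclideanSpace ℝ (Fin m))
    (hg : ConvexOn ℝ Set.univ g) (hh : ConvexOn ℝ Set.univ h)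
    (hg' : ∀ x, HasGradientAt g (g' x) x)
    (v : Fin r → EuclideanSpace ℝ (Fin m))
    (hspan : ∀ w : EuclideanSpace ℝ (Fin m), ∃ α : Fin r → ℝ,
      (∀ i, 0 ≤ α i) ∧ w = ∑ i, α i • v i)
    (xs : EuclideanSpace ℝ (Fin m)) :
    subdiff h xs = {g' xs} ↔
      ∀ i : Fin r, ∃ L : ℝ, HasDirDeriv (fun z => g z - h z) xs (v i) L ∧ 0 ≤ L := by
  have hDh : ∀ d, HasDirDeriv h xs d (dderiv h xs d) := fun d => hasDirDeriv_dderiv hh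
  have hDg : ∀ d, HasDirDeriv g xs d ⟪g' xs, d⟫ := fun d =>
    hasDirDeriv_of_gradient_s11 (hg' xs)
  have hDφ : ∀ d, HasDirDeriv (fun z => g z - h z) xs d (⟪g' xs, d⟫ - dderiv h xs d) :=
    fun d => hasDirDeriv_sub (hDg d) (hDh d)
  have p_hom : ∀ c : ℝ, 0 < c → ∀ d, dderiv h xs (c • d) = c * dderiv h xs d := fun c hc d =>
    dderiv_smul hh hc
  have p_add : ∀ d₁ d₂, dderiv h xs (d₁ + d₂) ≤ dderiv h xs d₁ + dderiv h xs d₂ :=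
    fun d₁ d₂ => dderiv_add_le hh
  have p_zero : dderiv h xs (0 : EuclideanSpace ℝ (Fin m)) = 0 := dderiv_zero hh
  have p_le_one : ∀ d, dderiv h xs d ≤ h (xs + d) - h xs := by
    intro d
    have := dderiv_le hh (x := xs) (d := d) (t := 1) one_pos
    simpa using this
  constructor
  · -- forward
    intro hsub
    have key : ∀ d, dderiv h xs d ≤ ⟪g' xs, d⟫ := by
      intro d
      by_cases hd : d = 0
      · simp [hd, p_zero]
      by_contra hlt
      push_neg at hlt
      set f := LinearPMap.mkSpanSingleton (K := ℝ) (σ := RingHom.id ℝ) d (dderiv h xs d) hd with hf_def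
      have hf : ∀ z : f.domain, f z ≤ dderiv h xs z := by
        rintro ⟨z, hz⟩
        obtain ⟨t, rfl⟩ := Submodule.mem_span_singleton.1 hz
        have happ : f ⟨t • d, hz⟩ = t • dderiv h xs d :=
          LinearPMap.mkSpanSingleton'_apply d (dderiv h xs d) _ t hz
        rw [happ]
        rcases lt_trichotomy t 0 with htn | rfl | htp
        · have e1 : t • d = (-t) • (-d) := by rw [smul_neg, neg_smul, neg_neg]
          have e2 : dderiv h xs (t • d) = (-t) * dderiv h xs (-d) := by
            rw [e1, p_hom (-t) (by linarith) (-d)]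
          have hsum : 0 ≤ dderiv h xs d + dderiv h xs (-d) := by
            have := p_add d (-d)
            simpa [p_zero] using this
          have e3 : (t : ℝ) • dderiv h xs d = t * dderiv h xs d := rfl
          rw [e3, e2]
          nlinarith
        · simp [p_zero]
        · rw [p_hom t htp d]; exact le_of_eq rfl
      obtain ⟨Gl, hGl1, hGl2⟩ :=
        exists_extension_of_le_sublinear f (dderiv h xs) p_hom p_add hf
      set w := (InnerProductSpace.toDual ℝ (EuclideanSpace ℝ (Fin m))).symm
        (LinearMap.toContinuousLinearMap Gl) with hw_def
      have hw_inner : ∀ y, ⟪w, y⟫ = Gl y := fun y => by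
        rw [hw_def, InnerProductSpace.toDual_symm_apply]
        simp
      have hw_mem : w ∈ subdiff h xs := by
        intro y
        have h1 : ⟪w, y - xs⟫ ≤ dderiv h xs (y - xs) := (hw_inner (y - xs)) ▸ hGl2 (y - xs)
        have h2 : dderiv h xs (y - xs) ≤ h (xs + (y - xs)) - h xs := p_le_one (y - xs)
        rw [add_sub_cancel] at h2
        linarith
      have hw_eq : w = g' xs := by
        rw [hsub] at hw_mem
        simpa using hw_mem
      have hfd : Gl d = dderiv h xs d := by
        have hmem : d ∈ f.domain := by
          rw [hf_def]; exact Submodule.mem_span_singleton_self d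
        exact (hGl1 ⟨d, hmem⟩).trans
          (LinearPMap.mkSpanSingleton_apply ℝ ℝ hd (dderiv h xs d))
      have : ⟪g' xs, d⟫ = dderiv h xs d := by rw [← hw_eq, hw_inner d, hfd]
      linarith
    intro i
    refine ⟨⟪g' xs, v i⟫ - dderiv h xs (v i), hDφ (v i), ?_⟩
    linarith [key (v i)]
  · -- backward
    intro hL
    have hvi : ∀ i, dderiv h xs (v i) ≤ ⟪g' xs, v i⟫ := by
      intro i
      obtain ⟨L, hLd, hL0⟩ := hL i
      have := hasDirDeriv_unique hLd (hDφ (v i))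
      linarith
    have p_sum : ∀ (s : Finset (Fin r)) (f : Fin r → EuclideanSpace ℝ (Fin m)),
        dderiv h xs (∑ i ∈ s, f i) ≤ ∑ i ∈ s, dderiv h xs (f i) := by
      intro s f
      induction s using Finset.cons_induction with
      | empty => simp [p_zero]
      | cons a s ha ih =>
        rw [Finset.sum_cons, Finset.sum_cons]
        exact (p_add _ _).trans (by linarith)
    have key : ∀ d, dderiv h xs d ≤ ⟪g' xs, d⟫ := by
      intro d
      obtain ⟨α, hα, hd⟩ := hspan d
      rw [hd]
      calc dderiv h xs (∑ i, α i • v i) ≤ ∑ i, dderiv h xs (α i • v i) :=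
            p_sum Finset.univ _
        _ ≤ ∑ i, α i * ⟪g' xs, v i⟫ := by
            refine Finset.sum_le_sum fun i _ => ?_
            rcases (hα i).lt_or_eq with hpos | hzero
            · rw [p_hom (α i) hpos (v i)]
              exact mul_le_mul_of_nonneg_left (hvi i) hpos.le
            · rw [← hzero]; simp [p_zero]
        _ = ⟪g' xs, ∑ i, α i • v i⟫ := by
            rw [inner_sum]
            exact Finset.sum_congr rfl fun i _ => (real_inner_smul_right _ _ _).symm
    rw [Set.eq_singleton_iff_unique_mem]
    constructor
    · intro y
      have h1 : h xs - h (xs + (y - xs)) ≤ dderiv h xs (-(y - xs)) := sub_le_dderiv_neg hh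
      rw [add_sub_cancel] at h1
      have h2 : dderiv h xs (-(y - xs)) ≤ ⟪g' xs, -(y - xs)⟫ := key _
      rw [inner_neg_right] at h2
      linarith
    · intro w hw
      have hwd : ∀ d, ⟪w, d⟫ ≤ dderiv h xs d := by
        intro d
        refine le_dderiv fun t ht => ?_
        have := hw (xs + t • d)
        rw [add_sub_cancel_left, real_inner_smul_right] at this
        rw [le_div_iff₀ ht]
        linarith [this]
      have hfin : ∀ d, ⟪w - g' xs, d⟫ ≤ 0 := by
        intro d
        rw [inner_sub_left]
        linarith [hwd d, key d]
      have := hfin (w - g' xs)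
      have hz : w - g' xs = 0 := by
        rwa [real_inner_self_nonpos] at this
      exact sub_eq_zero.1 hz
end
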